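/- arXiv:1802.05905 — 14 statements merged into one kernel-verified Lean document; each statement's English description precedes it below -/
import Mathlib

section
/- Let G be an undirected temporal graph with edge ordering t, let v be a vertex of degree one in G, and let u be the unique neighbour of v. Then the temporal reachability set of v is a subset of the temporal reachability set of u. -/
variable {V : Type*}

/-- Strict temporal reachability: `TReach G t u v τ` means there is a strict temporal
path from `u` to `v` whose last edge is active at time `τ`. -/
inductive TReach (G : SimpleGraph V) (t : Sym2 V → ℕ) (u : V) : V → ℕ → Prop
  | single {v : V} (h : G.Adj u v) : TReach G t u v (t s(u, v))
  | cons {v w : V} {τ : ℕ} (h : TReach G t u v τ) (hadj : G.Adj v w)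
      (hlt : τ < t s(v, w)) : TReach G t u w (t s(v, w))

/-- The temporal reachability set of `u`: `u` together with all vertices reachable
from `u` by a strict temporal path. -/
def reachSet (G : SimpleGraph V) (t : Sym2 V → ℕ) (u : V) : Set V :=
  {v | v = u ∨ ∃ τ, TReach G t u v τ}


lemma TReach_leaf (G : SimpleGraph V) (t : Sym2 V → ℕ) (u v : V)
    (hleaf : G.neighborSet v = {u}) {w : V} {τ : ℕ} (h : TReach G t v w τ) :
    w = u ∨ ∃ τ' ≤ τ, TReach G t u w τ' := by
  induction h with
  | @single x hadj =>
    left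
    have : x ∈ G.neighborSet v := hadj
    rw [hleaf] at this
    exact this
  | @cons x w τ h hadj hlt ih =>
    rcases ih with rfl | ⟨τ', hle, h'⟩
    · right; exact ⟨_, le_rfl, TReach.single hadj⟩
    · right; exact ⟨_, le_rfl, TReach.cons h' hadj (lt_of_le_of_lt hle hlt)⟩

/-- Observation 1: if `v` has degree one with unique neighbour `u`, then the temporal
reachability set of `v` is contained in that of `u`. -/
theorem stmt_0 (G : SimpleGraph V) (t : Sym2 V → ℕ) (u v : V)
    (hleaf : G.neighborSet v = {u}) :
    reachSet G t v ⊆ reachSet G t u := by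
  intro w hw
  have hvu : G.Adj v u := by
    have : u ∈ G.neighborSet v := by rw [hleaf]; rfl
    exact this
  rcases hw with rfl | ⟨τ, h⟩
  · right; exact ⟨_, TReach.single hvu.symm⟩
  · rcases TReach_leaf G t u v hleaf h with rfl | ⟨τ', _, h'⟩
    · left; rfl
    · right; exact ⟨τ', h'⟩
end

section
/- Let uv be an edge in an undirected temporal graph (G, t). Suppose uv is active at time t1 and no other edge incident with v is active at a time less than or equal to t1. Then the temporal reachability set of v is a subset of the temporal reachability set of u. -/
variable {V : Type*}

/-- Observation 2: if `uv` is an edge first active at time `t1 = t s(u,v)` and no other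
edge incident with `v` is active at a time at most `t1`, then the temporal reachability
set of `v` is contained in that of `u`. -/
theorem stmt_1 (G : SimpleGraph V) (t : Sym2 V → ℕ) (u v : V)
    (hadj : G.Adj u v)
    (hfirst : ∀ w : V, G.Adj v w → w ≠ u → t s(u, v) < t s(v, w)) :
    reachSet G t v ⊆ reachSet G t u := by
  have key : ∀ x τ, TReach G t v x τ → x = u ∨ ∃ τ', TReach G t u x τ' ∧ τ' ≤ τ := by
    intro x τ h
    induction h with
    | @single w hw =>
      by_cases hwu : w = u
      · exact Or.inl hwu
      · refine Or.inr ⟨t s(v, w), ?_, le_refl _⟩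
        exact TReach.cons (TReach.single hadj) hw (hfirst w hw hwu)
    | @cons x w τ h hxw hlt ih =>
      rcases ih with rfl | ⟨τ', hτ', hle⟩
      · exact Or.inr ⟨t s(x, w), TReach.single hxw, le_refl _⟩
      · exact Or.inr ⟨t s(x, w), TReach.cons hτ' hxw (lt_of_le_of_lt hle hlt), le_refl _⟩
  intro x hx
  rcases hx with rfl | ⟨τ, hτ⟩
  · exact Or.inr ⟨t s(u, x), TReach.single hadj⟩
  · rcases key x τ hτ with rfl | ⟨τ', hτ', _⟩
    · exact Or.inl rfl
    · exact Or.inr ⟨τ', hτ'⟩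
end

section
/- Let G be a DAG with maximum out-degree Δ^out. The minimum over all bijective time assignments t of the maximum temporal reachability of (G, t) equals Δ^out + 1. -/
variable {V : Type*}

/-- Strict temporal reachability in a digraph with edge relation `E` and time
assignment `t`: `DTReach E t u v τ` means there is a strict temporal (directed)
path from `u` to `v` whose last edge is active at time `τ`. -/
inductive DTReach (E : V → V → Prop) (t : V → V → ℕ) (u : V) : V → ℕ → Prop
  | single {v : V} (h : E u v) : DTReach E t u v (t u v)
  | cons {v w : V} {τ : ℕ} (h : DTReach E t u v τ) (hadj : E v w)
      (hlt : τ < t v w) : DTReach E t u w (t v w)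

/-- The temporal reachability set of `u` in a directed temporal graph. -/
def dreachSet (E : V → V → Prop) (t : V → V → ℕ) (u : V) : Set V :=
  {v | v = u ∨ ∃ τ, DTReach E t u v τ}

/-!
Every out-neighbour of `v` is reached by a one-edge path, whatever the times, so some vertex
reaches at least `Δ^out + 1` vertices. Conversely, number the edges so that the times decrease
with the source in a topological order: along any path `u → v → w` the edge leaving `v` is then
earlier than the edge entering it, so temporal paths have a single edge and every vertex reaches
exactly its out-neighbours and itself.
-/

open Finset

section OrderRank

variable {α : Type*} [LinearOrder α] (s : Finset α)

def orderRank (a : α) : ℕ := #{b ∈ s | b < a} + 1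

variable {s}

theorem orderRank_lt_orderRank {a b : α} (ha : a ∈ s) (hab : a < b) :
    orderRank s a < orderRank s b := by
  have hsub : {c ∈ s | c < a} ⊂ {c ∈ s | c < b} :=
    (ssubset_iff_of_subset (monotone_filter_right s fun _ _ hc => hc.trans hab)).2
      ⟨a, mem_filter.2 ⟨ha, hab⟩, by simp⟩
  exact Nat.succ_lt_succ (card_lt_card hsub)

theorem orderRank_mem_Icc {a : α} (ha : a ∈ s) : orderRank s a ∈ Icc 1 #s := by
  have hlt : #{b ∈ s | b < a} < #s :=
    card_lt_card (filter_ssubset.2 ⟨a, ha, lt_irrefl a⟩)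
  exact mem_Icc.2 ⟨Nat.le_add_left 1 _, hlt⟩

variable (s)

theorem bijOn_orderRank : Set.BijOn (orderRank s) s (Set.Icc 1 #s) := by
  have hmaps : Set.MapsTo (orderRank s) s (Icc 1 #s) := fun _ ha => orderRank_mem_Icc ha
  have hinj : Set.InjOn (orderRank s) s := by
    intro a ha b hb hab
    by_contra hne
    rcases lt_or_gt_of_ne hne with h | h
    · exact (orderRank_lt_orderRank ha h).ne hab
    · exact (orderRank_lt_orderRank hb h).ne' hab
  rw [← coe_Icc]
  exact ⟨hmaps, hinj, surjOn_of_injOn_of_card_le _ hmaps hinj (by simp)⟩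

end OrderRank

section TemporalReach

variable {E : V → V → Prop} {t : V → V → ℕ}

theorem insert_setOf_adj_subset_dreachSet (u : V) :
    insert u {v | E u v} ⊆ dreachSet E t u := by
  rintro v (rfl | huv)
  · exact Or.inl rfl
  · exact Or.inr ⟨_, DTReach.single huv⟩

theorem DTReach.adj_of_not_increasing (hE : ∀ u v w, E u v → E v w → t v w ≤ t u v)
    {u v : V} {τ : ℕ} (h : DTReach E t u v τ) : E u v ∧ τ = t u v := by
  induction h with
  | single huv => exact ⟨huv, rfl⟩
  | cons _ hvw hlt ih =>
    obtain ⟨huv, rfl⟩ := ih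
    exact absurd hlt (not_lt.2 (hE _ _ _ huv hvw))

theorem dreachSet_eq_of_not_increasing (hE : ∀ u v w, E u v → E v w → t v w ≤ t u v)
    (u : V) : dreachSet E t u = insert u {v | E u v} := by
  refine Set.Subset.antisymm ?_ (insert_setOf_adj_subset_dreachSet u)
  rintro v (rfl | ⟨τ, h⟩)
  · exact Or.inl rfl
  · exact Or.inr (h.adj_of_not_increasing hE).1

end TemporalReach

section DAG

variable [LinearOrder V] {E : Finset (V × V)}

theorem ncard_insert_setOf_mem [DecidableEq V] (htopo : ∀ p ∈ E, p.1 < p.2) (u : V) :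
    (insert u {v | (u, v) ∈ E}).ncard = #{p ∈ E | p.1 = u} + 1 := by
  have hout : Prod.mk u '' {v | (u, v) ∈ E} = ↑{p ∈ E | p.1 = u} := by
    ext ⟨a, b⟩
    simp only [Set.mem_image, Set.mem_ofPred_eq, Prod.mk.injEq, coe_filter]
    constructor
    · rintro ⟨v, hv, rfl, rfl⟩
      exact ⟨hv, rfl⟩
    · rintro ⟨hab, rfl⟩
      exact ⟨b, hab, rfl, rfl⟩
  have hfin : {v | (u, v) ∈ E}.Finite :=
    Set.Finite.of_finite_image (hout ▸ E.finite_toSet.subset (filter_subset _ E))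
      (Prod.mk_right_injective u).injOn
  have hu : u ∉ {v | (u, v) ∈ E} := fun h => lt_irrefl u (htopo _ h)
  rw [Set.ncard_insert_of_notMem hu hfin,
    ← Set.ncard_image_of_injective _ (Prod.mk_right_injective u), hout, Set.ncard_coe_finset]

def sourceDescKey : V × V ≃ Vᵒᵈ ×ₗ V :=
  (Equiv.prodCongr OrderDual.toDual (Equiv.refl V)).trans toLex

theorem sourceDescKey_lt_of_fst_lt {p q : V × V} (h : p.1 < q.1) :
    sourceDescKey q < sourceDescKey p :=
  Prod.Lex.lt_iff.2 (Or.inl h)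

variable (E) in
def sourceDescTime (a b : V) : ℕ :=
  orderRank (E.map sourceDescKey.toEmbedding) (sourceDescKey (a, b))

theorem bijOn_sourceDescTime :
    Set.BijOn (fun p : V × V => sourceDescTime E p.1 p.2) E (Set.Icc 1 #E) := by
  have hkey : Set.BijOn sourceDescKey E (E.map sourceDescKey.toEmbedding : Set (Vᵒᵈ ×ₗ V)) := by
    rw [coe_map]
    exact sourceDescKey.injective.injOn.bijOn_image
  have h := (bijOn_orderRank (E.map sourceDescKey.toEmbedding)).comp hkey
  rwa [card_map] at h

theorem sourceDescTime_not_increasing (htopo : ∀ p ∈ E, p.1 < p.2) (u v w : V)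
    (huv : (u, v) ∈ E) (hvw : (v, w) ∈ E) : sourceDescTime E v w ≤ sourceDescTime E u v :=
  (orderRank_lt_orderRank (mem_map_equiv.2 (by simpa using hvw))
    (sourceDescKey_lt_of_fst_lt (htopo _ huv))).le

end DAG

/-- For a DAG (edges `E`, topologically ordered by `<`), the minimum, over all bijective
time assignments of `{1,…,|E|}` to the edges, of the maximum temporal reachability
equals the maximum out-degree plus one. -/
theorem stmt_5 {V : Type*} [Fintype V] [Nonempty V] [LinearOrder V]
    [DecidableEq V] (E : Finset (V × V))
    (htopo : ∀ p ∈ E, p.1 < p.2) :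
    IsLeast {k : ℕ | ∃ t : V → V → ℕ,
        Set.BijOn (fun p : V × V => t p.1 p.2) (↑E : Set (V × V)) (Set.Icc 1 E.card) ∧
        k = Finset.univ.sup fun v : V =>
          (dreachSet (fun a b => (a, b) ∈ E) t v).ncard}
      ((Finset.univ.sup fun v : V => (E.filter fun p => p.1 = v).card) + 1) := by
  have hsup : (Finset.univ.sup fun v : V => (E.filter fun p => p.1 = v).card) + 1 =
      Finset.univ.sup fun v : V => (E.filter fun p => p.1 = v).card + 1 :=
    apply_sup_eq_sup_comp_of_nonempty (fun _ _ h => Nat.succ_le_succ h) univ_nonempty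
  rw [hsup]
  refine ⟨⟨sourceDescTime E, bijOn_sourceDescTime, ?_⟩, ?_⟩
  · refine Finset.sup_congr rfl fun v _ => ?_
    rw [dreachSet_eq_of_not_increasing (sourceDescTime_not_increasing htopo),
      ncard_insert_setOf_mem htopo]
  · rintro k ⟨t, -, rfl⟩
    refine Finset.sup_mono_fun fun v _ => ?_
    rw [← ncard_insert_setOf_mem htopo]
    exact Set.ncard_le_ncard (insert_setOf_adj_subset_dreachSet (E := fun a b => (a, b) ∈ E) v)
end

section
/- Let T be a tree with vertex cover number c ≥ 1. Then T has at most 2c − 1 vertices of degree at least two. -/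
/-!
Root the tree at a vertex `r` of the cover `C`. A vertex `v ∉ C` of degree at least two has a
neighbour other than its parent; that neighbour lies in `C` (the edge must be covered), is not
the root, and is a child of `v`. Since every vertex has only one parent, this assigns distinct
vertices of `C \ {r}` to the vertices of degree at least two outside `C`, so there are at most
`|C| - 1` of them, and at most `|C|` inside `C`.
-/

open Finset

namespace SimpleGraph

variable {V : Type*} {G : SimpleGraph V}

lemma IsAcyclic.penultimate_eq_of_adj_of_ne_penultimate (hG : G.IsAcyclic) {r v c : V}
    {p : G.Walk r v} {q : G.Walk r c} (hp : p.IsPath) (hq : q.IsPath) (hadj : G.Adj v c)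
    (hc : c ≠ p.penultimate) : c ≠ r ∧ q.penultimate = v := by
  have hcp : c ∉ p.support := fun h ↦ hc (hG.eq_penultimate_of_adj_end hp hadj h)
  have hvq : v ∈ q.support :=
    hG.mem_support_of_ne_mem_support_of_adj_of_isPath hq hp hadj.symm hcp
  refine ⟨fun hcr ↦ hcp (hcr ▸ p.start_mem_support), ?_⟩
  rw [hG.path_concat hp hq hadj hvq, Walk.penultimate_concat]

lemma IsAcyclic.exists_parent (hG : G.IsAcyclic) (hconn : G.Preconnected) (r : V) :
    ∃ parent : V → V, ∀ ⦃v c⦄, G.Adj v c → c ≠ parent v → c ≠ r ∧ parent c = v := by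
  choose p hp using hconn.exists_isPath r
  exact ⟨fun v ↦ (p v).penultimate, fun v c hadj hc ↦
    hG.penultimate_eq_of_adj_of_ne_penultimate (hp v) (hp c) hadj hc⟩

lemma IsVertexCover.card_two_le_degree_sdiff_le [Fintype V] [DecidableEq V] [DecidableRel G.Adj]
    (hG : G.IsAcyclic) (hconn : G.Preconnected) {C : Finset V} (hC : G.IsVertexCover C)
    (r : V) :
    (univ.filter (fun v ↦ 2 ≤ G.degree v) \ C).card ≤ (C.erase r).card := by
  obtain ⟨parent, hparent⟩ := hG.exists_parent hconn r
  have hchild : ∀ v ∈ univ.filter (fun v ↦ 2 ≤ G.degree v) \ C,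
      ∃ c, G.Adj v c ∧ c ≠ parent v := by
    intro v hv
    have hdeg : 1 < (G.neighborFinset v).card := by
      rw [card_neighborFinset_eq_degree]
      exact (mem_filter.mp (mem_sdiff.mp hv).1).2
    obtain ⟨c, hc, hne⟩ := exists_mem_ne hdeg (parent v)
    exact ⟨c, (mem_neighborFinset G v c).mp hc, hne⟩
  choose! child hadj hne using hchild
  refine card_le_card_of_injOn child (fun v hv ↦ ?_) (fun v hv w hw hvw ↦ ?_)
  · have hvC : v ∉ C := (mem_sdiff.mp hv).2
    exact mem_erase.mpr ⟨(hparent (hadj v hv) (hne v hv)).1,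
      (hC (hadj v hv)).resolve_left hvC⟩
  · rw [← (hparent (hadj v hv) (hne v hv)).2, hvw, (hparent (hadj w hw) (hne w hw)).2]

end SimpleGraph

/-- A tree with a vertex cover of size `c ≥ 1` has at most `2c - 1` vertices of degree
at least two. -/
theorem stmt_6 {V : Type*} [Fintype V] [DecidableEq V] (G : SimpleGraph V)
    [DecidableRel G.Adj] (hconn : G.Connected) (hac : G.IsAcyclic)
    (C : Finset V) (hcov : ∀ a b : V, G.Adj a b → a ∈ C ∨ b ∈ C) (hC : 1 ≤ C.card) :
    (Finset.univ.filter fun v : V => 2 ≤ G.degree v).card ≤ 2 * C.card - 1 := by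
  obtain ⟨r, hr⟩ := Finset.card_pos.mp hC
  set I := Finset.univ.filter fun v : V => 2 ≤ G.degree v
  have houtside : (I \ C).card ≤ (C.erase r).card :=
    SimpleGraph.IsVertexCover.card_two_le_degree_sdiff_le hac hconn.preconnected
      (fun a b ↦ hcov a b) r
  have hinside : (I ∩ C).card ≤ C.card := card_le_card inter_subset_right
  have hsplit := card_sdiff_add_card_inter I C
  rw [card_erase_of_mem hr] at houtside
  omega
end

section
/- Let G = (V, E) be a graph and let E1, ..., Es be a partition of E. For each i let Gi = (V, Ei), and suppose there is a time assignment ti on Ei such that the maximum temporal reachability of (Gi, ti) is at most ri. Then there is a time assignment t on E such that the maximum temporal reachability of (G, t) is at most the product r1 · r2 · ... · rs. -/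
variable {V : Type*}

/-! With `M` larger than every time used, shift the time assignment of block `i` into the
window `[M * i, M * (i + 1))`. A strict temporal path then traverses the blocks in increasing
order, so it is a concatenation of temporal paths in block `0`, block `1`, …, each of which
reaches at most `r i` vertices from its starting point; hence at most `∏ i, r i` vertices are
reachable in total. Reachability inside a block only depends on the relative order of its
times, which the shift preserves. -/

theorem Set.ncard_biUnion_le_ncard_mul {α ι : Type*} {t : Set ι} (ht : t.Finite)
    {s : ι → Set α} {b : ℕ} (hs : ∀ i ∈ t, (s i).ncard ≤ b) :
    (⋃ i ∈ t, s i).ncard ≤ t.ncard * b := by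
  calc (⋃ i ∈ t, s i).ncard = (⋃ i ∈ ht.toFinset, s i).ncard := by simp
    _ ≤ ∑ i ∈ ht.toFinset, (s i).ncard := Finset.set_ncard_biUnion_le _ _
    _ ≤ ht.toFinset.card * b := Finset.sum_le_card_nsmul _ _ _ (by simpa using hs)
    _ = t.ncard * b := by rw [Set.ncard_eq_toFinset_card _ ht]

namespace TReach

variable {G : SimpleGraph V} {t : Sym2 V → ℕ} {u v : V} {τ : ℕ}

theorem exists_mem_edgeSet (h : TReach G t u v τ) : ∃ e ∈ G.edgeSet, t e = τ := by
  cases h with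
  | single h => exact ⟨_, h, rfl⟩
  | cons _ hadj _ => exact ⟨_, hadj, rfl⟩

theorem exists_of_lt_imp_lt {t' : Sym2 V → ℕ}
    (ht : ∀ e ∈ G.edgeSet, ∀ f ∈ G.edgeSet, t e < t f → t' e < t' f)
    (h : TReach G t u v τ) : ∃ e ∈ G.edgeSet, t e = τ ∧ TReach G t' u v (t' e) := by
  induction h with
  | single h => exact ⟨_, h, rfl, .single h⟩
  | cons _ hadj hlt ih =>
    obtain ⟨e, he, rfl, h'⟩ := ih
    exact ⟨_, hadj, rfl, .cons h' hadj (ht e he _ hadj hlt)⟩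

end TReach

theorem reachSet_subset_of_lt_imp_lt {G : SimpleGraph V} {t t' : Sym2 V → ℕ}
    (ht : ∀ e ∈ G.edgeSet, ∀ f ∈ G.edgeSet, t e < t f → t' e < t' f) (u : V) :
    reachSet G t u ⊆ reachSet G t' u := by
  rintro v (rfl | ⟨τ, h⟩)
  · exact Or.inl rfl
  · obtain ⟨e, -, -, h'⟩ := h.exists_of_lt_imp_lt ht
    exact Or.inr ⟨_, h'⟩

def chainReachSet (H : ℕ → SimpleGraph V) (t : Sym2 V → ℕ) : ℕ → V → Set V
  | 0, u => {u}
  | k + 1, u => ⋃ v ∈ chainReachSet H t k u, reachSet (H k) t v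

namespace chainReachSet

variable {H : ℕ → SimpleGraph V} {t : Sym2 V → ℕ}

theorem mem_succ {k : ℕ} {u v w : V} (hv : v ∈ chainReachSet H t k u)
    (hw : w ∈ reachSet (H k) t v) : w ∈ chainReachSet H t (k + 1) u :=
  Set.mem_biUnion hv hw

theorem self_mem (k : ℕ) (u : V) : u ∈ chainReachSet H t k u := by
  induction k with
  | zero => rfl
  | succ k ih => exact mem_succ ih (Or.inl rfl)

theorem mono {k m : ℕ} (hkm : k ≤ m) (u : V) :
    chainReachSet H t k u ⊆ chainReachSet H t m u := by
  induction hkm with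
  | refl => rfl
  | step _ ih => exact fun w hw => mem_succ (ih hw) (Or.inl rfl)

theorem ncard_le_prod [Finite V] {r : ℕ → ℕ} {n : ℕ}
    (hr : ∀ k < n, ∀ v, (reachSet (H k) t v).ncard ≤ r k) (u : V) :
    (chainReachSet H t n u).ncard ≤ ∏ k ∈ Finset.range n, r k := by
  induction n with
  | zero => simp [chainReachSet]
  | succ n ih =>
    calc (chainReachSet H t (n + 1) u).ncard
        ≤ (chainReachSet H t n u).ncard * r n :=
          Set.ncard_biUnion_le_ncard_mul (Set.toFinite _) fun v _ => hr n n.lt_succ_self v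
      _ ≤ (∏ k ∈ Finset.range n, r k) * r n :=
          Nat.mul_le_mul_right _ (ih fun k hk => hr k (hk.trans n.lt_succ_self))
      _ = ∏ k ∈ Finset.range (n + 1), r k := (Finset.prod_range_succ _ _).symm

end chainReachSet

section Blocks

variable {G : SimpleGraph V} {H : ℕ → SimpleGraph V} {t : Sym2 V → ℕ} {n : ℕ}

theorem TReach.exists_mem_chainReachSet (hcover : ∀ a b, G.Adj a b → ∃ k < n, (H k).Adj a b)
    (hord : ∀ i < n, ∀ j < n, ∀ e ∈ (H i).edgeSet, ∀ f ∈ (H j).edgeSet, t e < t f → i ≤ j)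
    {u v : V} {τ : ℕ} (h : TReach G t u v τ) :
    ∃ k < n, ∃ x ∈ chainReachSet H t k u, TReach (H k) t x v τ := by
  induction h with
  | single h =>
    obtain ⟨k, hk, hH⟩ := hcover _ _ h
    exact ⟨k, hk, u, chainReachSet.self_mem k u, .single hH⟩
  | @cons v w τ _ hadj hlt ih =>
    obtain ⟨i, hi, x, hx, hT⟩ := ih
    obtain ⟨j, hj, hH⟩ := hcover _ _ hadj
    obtain ⟨e, he, rfl⟩ := hT.exists_mem_edgeSet
    rcases (hord i hi j hj e he _ hH hlt).eq_or_lt with rfl | hij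
    · exact ⟨i, hi, x, hx, .cons hT hH hlt⟩
    · have hv : v ∈ chainReachSet H t j u :=
        chainReachSet.mono hij u (chainReachSet.mem_succ hx (Or.inr ⟨_, hT⟩))
      exact ⟨j, hj, v, hv, .single hH⟩

theorem reachSet_subset_chainReachSet (hcover : ∀ a b, G.Adj a b → ∃ k < n, (H k).Adj a b)
    (hord : ∀ i < n, ∀ j < n, ∀ e ∈ (H i).edgeSet, ∀ f ∈ (H j).edgeSet, t e < t f → i ≤ j)
    (u : V) : reachSet G t u ⊆ chainReachSet H t n u := by
  rintro v (rfl | ⟨τ, h⟩)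
  · exact chainReachSet.self_mem n v
  · obtain ⟨k, hk, x, hx, hT⟩ := h.exists_mem_chainReachSet hcover hord
    exact chainReachSet.mono hk u (chainReachSet.mem_succ hx (Or.inr ⟨τ, hT⟩))

end Blocks

theorem reachSet_ncard_le_prod [Finite V] {G : SimpleGraph V} {t : Sym2 V → ℕ} {n : ℕ}
    {H : Fin n → SimpleGraph V} {r : Fin n → ℕ} (hcover : ∀ a b, G.Adj a b → ∃ i, (H i).Adj a b)
    (hord : ∀ i j, ∀ e ∈ (H i).edgeSet, ∀ f ∈ (H j).edgeSet, t e < t f → i ≤ j)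
    (hr : ∀ i v, (reachSet (H i) t v).ncard ≤ r i) (u : V) :
    (reachSet G t u).ncard ≤ ∏ i, r i := by
  let H' : ℕ → SimpleGraph V := fun k => if h : k < n then H ⟨k, h⟩ else ⊥
  let r' : ℕ → ℕ := fun k => if h : k < n then r ⟨k, h⟩ else 1
  have hcover' : ∀ a b, G.Adj a b → ∃ k < n, (H' k).Adj a b := fun a b hab => by
    obtain ⟨i, hi⟩ := hcover a b hab
    exact ⟨i, i.isLt, by simpa [H'] using hi⟩
  have hord' : ∀ i < n, ∀ j < n, ∀ e ∈ (H' i).edgeSet, ∀ f ∈ (H' j).edgeSet,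
      t e < t f → i ≤ j := fun i hi j hj e he f hf hlt => by
    simp only [H', dif_pos hi, dif_pos hj] at he hf
    exact hord ⟨i, hi⟩ ⟨j, hj⟩ e he f hf hlt
  have hr' : ∀ k < n, ∀ v, (reachSet (H' k) t v).ncard ≤ r' k := fun k hk v => by
    simpa [H', r', hk] using hr ⟨k, hk⟩ v
  calc (reachSet G t u).ncard ≤ (chainReachSet H' t n u).ncard :=
        Set.ncard_le_ncard (reachSet_subset_chainReachSet hcover' hord' u) (Set.toFinite _)
    _ ≤ ∏ k ∈ Finset.range n, r' k := chainReachSet.ncard_le_prod hr' u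
    _ = ∏ i, r i := by simp [Finset.prod_range, r']

section BlockTime

open Function

variable {s : ℕ} {E : Fin s → Set (Sym2 V)} {T : Fin s → Sym2 V → ℕ} {M : ℕ}

variable (E T M) in
open Classical in
noncomputable def blockTime (e : Sym2 V) : ℕ :=
  if h : ∃ i, e ∈ E i then M * h.choose + T h.choose e else 0

theorem blockTime_eq (hdisj : Pairwise (Disjoint on E)) {i : Fin s} {e : Sym2 V}
    (he : e ∈ E i) : blockTime E T M e = M * i + T i e := by
  have h : ∃ i, e ∈ E i := ⟨i, he⟩
  have hi : h.choose = i := by_contra fun hne =>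
    Set.disjoint_left.mp (hdisj hne) h.choose_spec he
  rw [blockTime, dif_pos h, hi]

theorem blockTime_div (hdisj : Pairwise (Disjoint on E)) {i : Fin s} {e : Sym2 V}
    (he : e ∈ E i) (hM : T i e < M) : blockTime E T M e / M = i := by
  rw [blockTime_eq hdisj he, Nat.mul_add_div (by omega), Nat.div_eq_of_lt hM, add_zero]

theorem blockTime_mod (hdisj : Pairwise (Disjoint on E)) {i : Fin s} {e : Sym2 V}
    (he : e ∈ E i) (hM : T i e < M) : blockTime E T M e % M = T i e := by
  rw [blockTime_eq hdisj he, Nat.mul_add_mod, Nat.mod_eq_of_lt hM]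

theorem injOn_blockTime (hdisj : Pairwise (Disjoint on E)) (hM : ∀ i, ∀ e ∈ E i, T i e < M)
    (hinj : ∀ i, (E i).InjOn (T i)) : (⋃ i, E i).InjOn (blockTime E T M) := by
  intro e he f hf hef
  obtain ⟨i, he⟩ := Set.mem_iUnion.mp he
  obtain ⟨j, hf⟩ := Set.mem_iUnion.mp hf
  obtain rfl : i = j := Fin.ext <| by
    rw [← blockTime_div hdisj he (hM i e he), ← blockTime_div hdisj hf (hM j f hf), hef]
  refine hinj i he hf ?_
  rw [← blockTime_mod hdisj he (hM i e he), ← blockTime_mod hdisj hf (hM i f hf), hef]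

theorem le_of_blockTime_lt (hdisj : Pairwise (Disjoint on E)) (hM : ∀ i, ∀ e ∈ E i, T i e < M)
    {i j : Fin s} {e f : Sym2 V} (he : e ∈ E i) (hf : f ∈ E j)
    (hlt : blockTime E T M e < blockTime E T M f) : i ≤ j := by
  rw [Fin.le_iff_val_le_val, ← blockTime_div hdisj he (hM i e he),
    ← blockTime_div hdisj hf (hM j f hf)]
  exact Nat.div_le_div_right hlt.le

theorem reachSet_fromEdgeSet_blockTime_subset (hdisj : Pairwise (Disjoint on E)) (i : Fin s)
    (v : V) : reachSet (.fromEdgeSet (E i)) (blockTime E T M) v ⊆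
      reachSet (.fromEdgeSet (E i)) (T i) v := by
  refine reachSet_subset_of_lt_imp_lt (fun e he f hf hlt => ?_) v
  rw [SimpleGraph.edgeSet_fromEdgeSet] at he hf
  rwa [blockTime_eq hdisj he.1, blockTime_eq hdisj hf.1, Nat.add_lt_add_iff_left] at hlt

end BlockTime

/-- Lemma: if the edge set of `G` is partitioned into sets `Es i`, each of which admits
a time assignment with maximum temporal reachability at most `r i`, then `G` admits a
time assignment with maximum temporal reachability at most `∏ i, r i`. -/
theorem stmt_7 {V : Type*} [Fintype V] (G : SimpleGraph V) (s : ℕ)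
    (Es : Fin s → Set (Sym2 V))
    (hunion : (⋃ i, Es i) = G.edgeSet)
    (hdisj : ∀ i j : Fin s, i ≠ j → Disjoint (Es i) (Es j))
    (r : Fin s → ℕ)
    (hri : ∀ i : Fin s, ∃ ti : Sym2 V → ℕ, Set.InjOn ti (Es i) ∧
        ∀ v : V, (reachSet (SimpleGraph.fromEdgeSet (Es i)) ti v).ncard ≤ r i) :
    ∃ t : Sym2 V → ℕ, Set.InjOn t G.edgeSet ∧
      ∀ v : V, (reachSet G t v).ncard ≤ ∏ i, r i := by
  choose T hinj hr using hri
  obtain ⟨M, hM⟩ := (Set.finite_range fun p : Fin s × Sym2 V => T p.1 p.2).bddAbove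
  have hTM : ∀ i, ∀ e ∈ Es i, T i e < M + 1 := fun i e _ => Nat.lt_succ_of_le (hM ⟨(i, e), rfl⟩)
  refine ⟨blockTime Es T (M + 1), hunion ▸ injOn_blockTime hdisj hTM hinj, fun u => ?_⟩
  refine reachSet_ncard_le_prod (H := fun i => .fromEdgeSet (Es i)) (fun a b hab => ?_)
    (fun i j e he f hf => ?_) (fun i v => ?_) u
  · obtain ⟨i, hi⟩ := Set.mem_iUnion.mp (hunion.symm ▸ hab : s(a, b) ∈ ⋃ i, Es i)
    exact ⟨i, (SimpleGraph.fromEdgeSet_adj _).mpr ⟨hi, hab.ne⟩⟩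
  · rw [SimpleGraph.edgeSet_fromEdgeSet] at he hf
    exact le_of_blockTime_lt hdisj hTM he.1 hf.1
  · exact (Set.ncard_le_ncard (reachSet_fromEdgeSet_blockTime_subset hdisj i v)).trans (hr i v)
end

section
/- For any graph G = (V, E), there is an injective assignment t of times to edges such that the maximum temporal reachability of (G, E, t) is at most 2^{χ'(G)}, where χ'(G) is the edge chromatic number of G. -/
variable {V : Type*}

/-- If `G` has a proper edge colouring with `n` colours, then there is an injective time
assignment to the edges such that the maximum temporal reachability is at most `2 ^ n`.
(In particular this holds for `n = χ'(G)`.) -/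
theorem stmt_8 {V : Type*} [Fintype V] (G : SimpleGraph V) (n : ℕ)
    (c : Sym2 V → Fin n)
    (hc : ∀ e ∈ G.edgeSet, ∀ e' ∈ G.edgeSet, e ≠ e' →
        (∃ a : V, a ∈ e ∧ a ∈ e') → c e ≠ c e') :
    ∃ t : Sym2 V → ℕ, Set.InjOn t G.edgeSet ∧
      ∀ v : V, (reachSet G t v).ncard ≤ 2 ^ n := by
  classical
  set m := Fintype.card (Sym2 V) with hmdef
  set f : Sym2 V → ℕ := fun e => (Fintype.equivFin (Sym2 V) e : ℕ) with hfdef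
  have hfinj : Function.Injective f := by
    intro a b h
    exact (Fintype.equivFin (Sym2 V)).injective (Fin.val_injective h)
  have hflt : ∀ e, f e < m := fun e => (Fintype.equivFin (Sym2 V) e).isLt
  set t : Sym2 V → ℕ := fun e => (c e : ℕ) * m + f e with htdef
  have htval : ∀ e, t e = (c e : ℕ) * m + f e := fun e => rfl
  have htinj : Function.Injective t := by
    intro e e' h
    apply hfinj
    have h1 : ((c e : ℕ) * m + f e) % m = ((c e' : ℕ) * m + f e') % m := by
      rw [← htval, ← htval, h]
    rwa [Nat.mul_comm ((c e : ℕ)) m, Nat.mul_comm ((c e' : ℕ)) m,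
      Nat.mul_add_mod, Nat.mul_add_mod, Nat.mod_eq_of_lt (hflt e),
      Nat.mod_eq_of_lt (hflt e')] at h1
  refine ⟨t, htinj.injOn, ?_⟩
  intro v
  have hblock : ∀ {e : Sym2 V} {k : ℕ}, k * m ≤ t e → t e < (k + 1) * m →
      (c e : ℕ) = k := by
    intro e k h1 h2
    rw [htval] at h1 h2
    have hfe := hflt e
    rcases lt_trichotomy ((c e : ℕ)) k with h | h | h
    · exfalso
      have h3 : ((c e : ℕ) + 1) * m ≤ k * m := Nat.mul_le_mul_right _ h
      nlinarith
    · exact h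
    · exfalso
      have h3 : (k + 1) * m ≤ (c e : ℕ) * m := Nat.mul_le_mul_right _ h
      nlinarith
  have hlast : ∀ {w : V} {τ : ℕ}, TReach G t v w τ →
      ∃ y, G.Adj y w ∧ τ = t s(y, w) := by
    intro w τ h
    cases h with
    | single h => exact ⟨v, h, rfl⟩
    | cons h hadj hlt => exact ⟨_, hadj, rfl⟩
  have huniq : ∀ x w w' : V, G.Adj x w → G.Adj x w' →
      (c s(x, w) : ℕ) = (c s(x, w') : ℕ) → w = w' := by
    intro x w w' h h' hcc
    by_contra hne
    have hedge : s(x, w) ≠ s(x, w') := fun hh => hne (Sym2.congr_right.mp hh)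
    exact hc s(x, w) (G.mem_edgeSet.mpr h) s(x, w') (G.mem_edgeSet.mpr h') hedge
      ⟨x, Sym2.mem_mk_left x w, Sym2.mem_mk_left x w'⟩ (Fin.val_injective hcc)
  set g : ℕ → V → V := fun k x =>
    if h : ∃ w, G.Adj x w ∧ (c s(x, w) : ℕ) = k then h.choose else x with hgdef
  have hgval : ∀ (k : ℕ) (x w : V), G.Adj x w → (c s(x, w) : ℕ) = k → g k x = w := by
    intro k x w hadj hck
    have hex : ∃ w', G.Adj x w' ∧ (c s(x, w') : ℕ) = k := ⟨w, hadj, hck⟩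
    rw [hgdef]
    simp only [dif_pos hex]
    exact huniq x _ w hex.choose_spec.1 hadj (hex.choose_spec.2.trans hck.symm)
  set S : ℕ → Set V := fun k =>
    {w | w = v ∨ ∃ τ, TReach G t v w τ ∧ τ < k * m} with hSdef
  have hstep : ∀ k, S (k + 1) ⊆ S k ∪ g k '' S k := by
    intro k w hw
    rcases hw with rfl | ⟨τ, hre, hτ⟩
    · exact Or.inl (Or.inl rfl)
    by_cases hτk : τ < k * m
    · exact Or.inl (Or.inr ⟨τ, hre, hτk⟩)
    push_neg at hτk
    cases hre with
    | single h =>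
        have hck : (c s(v, w) : ℕ) = k := hblock hτk hτ
        exact Or.inr ⟨v, Or.inl rfl, hgval k v w h hck⟩
    | cons h hadj hlt =>
        rename_i x τ'
        have hck : (c s(x, w) : ℕ) = k := hblock hτk hτ
        by_cases hx : τ' < k * m
        · exact Or.inr ⟨x, Or.inr ⟨τ', h, hx⟩, hgval k x w hadj hck⟩
        · exfalso
          push_neg at hx
          obtain ⟨y, hyx, rfl⟩ := hlast h
          have hck' : (c s(y, x) : ℕ) = k := hblock hx (lt_trans hlt hτ)
          have hne : s(y, x) ≠ s(x, w) := by
            intro hh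
            rw [hh] at hlt
            exact lt_irrefl _ hlt
          exact hc s(y, x) (G.mem_edgeSet.mpr hyx) s(x, w) (G.mem_edgeSet.mpr hadj)
            hne ⟨x, Sym2.mem_mk_right y x, Sym2.mem_mk_left x w⟩
            (Fin.val_injective (hck'.trans hck.symm))
  have hSk : ∀ k, (S k).ncard ≤ 2 ^ k := by
    intro k
    induction k with
    | zero =>
        have hsub : S 0 ⊆ {v} := by
          rintro w (rfl | ⟨τ, _, hτ⟩)
          · rfl
          · simp at hτ
        calc (S 0).ncard ≤ ({v} : Set V).ncard :=
              Set.ncard_le_ncard hsub (Set.toFinite _)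
          _ = 1 := Set.ncard_singleton v
          _ ≤ 2 ^ 0 := by norm_num
    | succ k ih =>
        calc (S (k + 1)).ncard ≤ (S k ∪ g k '' S k).ncard :=
              Set.ncard_le_ncard (hstep k) (Set.toFinite _)
          _ ≤ (S k).ncard + (g k '' S k).ncard := Set.ncard_union_le _ _
          _ ≤ 2 ^ k + 2 ^ k :=
              add_le_add ih (le_trans (Set.ncard_image_le (Set.toFinite _)) ih)
          _ = 2 ^ (k + 1) := by ring
  have hsub : reachSet G t v ⊆ S n := by
    intro w hw
    rcases hw with rfl | ⟨τ, hre⟩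
    · exact Or.inl rfl
    obtain ⟨y, hyw, rfl⟩ := hlast hre
    refine Or.inr ⟨_, hre, ?_⟩
    rw [htval]
    have h1 : (c s(y, w) : ℕ) < n := (c s(y, w)).isLt
    have h2 : f s(y, w) < m := hflt _
    have h3 : ((c s(y, w) : ℕ) + 1) * m ≤ n * m := Nat.mul_le_mul_right _ h1
    nlinarith
  calc (reachSet G t v).ncard ≤ (S n).ncard :=
        Set.ncard_le_ncard hsub (Set.toFinite _)
    _ ≤ 2 ^ n := hSk n
end

section
/- Let P be a path on at least five vertices. For every injective assignment t of times to the edges of P, the maximum temporal reachability of (P, t) is at least 4. -/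
variable {V : Type*}

lemma key_reach {V : Type*} [Finite V] (G : SimpleGraph V) (t : Sym2 V → ℕ) (u x y z : V)
    (hxu : x ≠ u) (hyu : y ≠ u) (hzu : z ≠ u) (hxy : x ≠ y) (hxz : x ≠ z) (hyz : y ≠ z)
    (hux : G.Adj u x) (huy : G.Adj u y) (hyz' : G.Adj y z) (hlt : t s(u, y) < t s(y, z)) :
    4 ≤ (reachSet G t u).ncard := by
  have hsub : ({u, x, y, z} : Set V) ⊆ reachSet G t u := by
    intro w hw
    rcases hw with rfl | rfl | rfl | rfl
    · exact Or.inl rfl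
    · exact Or.inr ⟨_, TReach.single hux⟩
    · exact Or.inr ⟨_, TReach.single huy⟩
    · exact Or.inr ⟨_, TReach.cons (TReach.single huy) hyz' hlt⟩
  have hcard : ({u, x, y, z} : Set V).ncard = 4 := by
    rw [Set.ncard_insert_of_notMem (by simp [hxu.symm, hyu.symm, hzu.symm]),
        Set.ncard_insert_of_notMem (by simp [hxy, hxz]),
        Set.ncard_insert_of_notMem (by simp [hyz]), Set.ncard_singleton]
  calc 4 = ({u, x, y, z} : Set V).ncard := hcard.symm
    _ ≤ (reachSet G t u).ncard := Set.ncard_le_ncard hsub (Set.toFinite _)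

/-- On a path with at least five vertices, every injective time assignment to the edges
yields maximum temporal reachability at least four. -/
theorem stmt_9 (n : ℕ) (hn : 5 ≤ n) (t : Sym2 (Fin n) → ℕ)
    (ht : Set.InjOn t (SimpleGraph.pathGraph n).edgeSet) :
    ∃ v : Fin n, 4 ≤ (reachSet (SimpleGraph.pathGraph n) t v).ncard := by
  set G := SimpleGraph.pathGraph n with hG
  let v0 : Fin n := ⟨0, by omega⟩
  let v1 : Fin n := ⟨1, by omega⟩
  let v2 : Fin n := ⟨2, by omega⟩
  let v3 : Fin n := ⟨3, by omega⟩
  let v4 : Fin n := ⟨4, by omega⟩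
  have ne : ∀ i j : Fin n, i.val ≠ j.val → i ≠ j := by
    intro i j h hij; exact h (by rw [hij])
  have adj : ∀ i j : Fin n, i.val + 1 = j.val → G.Adj i j := by
    intro i j h
    rw [hG, SimpleGraph.pathGraph_adj]
    exact Or.inl h
  have h01 : G.Adj v0 v1 := adj _ _ rfl
  have h12 : G.Adj v1 v2 := adj _ _ rfl
  have h23 : G.Adj v2 v3 := adj _ _ rfl
  have h34 : G.Adj v3 v4 := adj _ _ rfl
  have hne : t s(v1, v2) ≠ t s(v2, v3) := by
    intro h
    have := ht (G.mem_edgeSet.mpr h12) (G.mem_edgeSet.mpr h23) h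
    rw [Sym2.eq_iff] at this
    rcases this with ⟨h1, _⟩ | ⟨h1, _⟩
    · exact ne v1 v2 (by simp [v1, v2]) h1
    · exact ne v1 v3 (by simp [v1, v3]) h1
  rcases lt_or_gt_of_ne hne with hlt | hlt
  · refine ⟨v1, key_reach G t v1 v0 v2 v3 ?_ ?_ ?_ ?_ ?_ ?_ h01.symm h12 h23 hlt⟩
    all_goals exact ne _ _ (by simp [v0, v1, v2, v3])
  · refine ⟨v3, key_reach G t v3 v4 v2 v1 ?_ ?_ ?_ ?_ ?_ ?_ h34 h23.symm h12.symm ?_⟩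
    · exact ne _ _ (by simp [v4, v3])
    · exact ne _ _ (by simp [v2, v3])
    · exact ne _ _ (by simp [v1, v3])
    · exact ne _ _ (by simp [v4, v2])
    · exact ne _ _ (by simp [v4, v1])
    · exact ne _ _ (by simp [v2, v1])
    · rwa [Sym2.eq_swap (a := v3) (b := v2), Sym2.eq_swap (a := v2) (b := v1)]
end

section
/- Let P be a path on at least five vertices and let e1 = uv, e2 = vw be incident edges of P with u, v, w all internal to arguments in the sense that e1 and e2 are both non-leaf edges. If t(e1) < t(e2), then the temporal reachability set of u has size at least 4. -/
variable {V : Type*}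

/-- On a path, if `uv` and `vw` are incident non-leaf edges (all of `u`, `v`, `w` have
degree at least two) and `t(uv) < t(vw)`, then the temporal reachability set of `u` has
size at least four. -/
theorem stmt_10 (n : ℕ) (hn : 5 ≤ n) (t : Sym2 (Fin n) → ℕ)
    (ht : Set.InjOn t (SimpleGraph.pathGraph n).edgeSet)
    (u v w : Fin n)
    (huv : (SimpleGraph.pathGraph n).Adj u v)
    (hvw : (SimpleGraph.pathGraph n).Adj v w)
    (huw : u ≠ w)
    (hdu : 2 ≤ ((SimpleGraph.pathGraph n).neighborSet u).ncard)
    (hdv : 2 ≤ ((SimpleGraph.pathGraph n).neighborSet v).ncard)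
    (hdw : 2 ≤ ((SimpleGraph.pathGraph n).neighborSet w).ncard)
    (htlt : t s(u, v) < t s(v, w)) :
    4 ≤ (reachSet (SimpleGraph.pathGraph n) t u).ncard := by
  obtain ⟨u', hu'mem, hu'v⟩ := Set.exists_ne_of_one_lt_ncard (s := (SimpleGraph.pathGraph n).neighborSet u) (by omega) v
  rw [SimpleGraph.mem_neighborSet] at hu'mem
  have hu'w : u' ≠ w := by
    intro h; subst h
    rw [SimpleGraph.pathGraph_adj] at huv hvw hu'mem
    omega
  have huvne : u ≠ v := huv.ne
  have hvwne : v ≠ w := hvw.ne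
  have hu'u : u' ≠ u := hu'mem.ne'
  have hsub : ({u', u, v, w} : Set (Fin n)) ⊆ reachSet (SimpleGraph.pathGraph n) t u := by
    intro x hx
    rcases hx with h | h | h | h
    · exact h ▸ Or.inr ⟨_, TReach.single hu'mem⟩
    · exact Or.inl h
    · exact h ▸ Or.inr ⟨_, TReach.single huv⟩
    · exact h ▸ Or.inr ⟨_, TReach.cons (TReach.single huv) hvw htlt⟩
  have := Set.ncard_le_ncard hsub (Set.toFinite _)
  have hcard : ({u', u, v, w} : Set (Fin n)).ncard = 4 := by
    rw [Set.ncard_insert_of_notMem (by simp [hu'u, hu'v, hu'w]) (Set.toFinite _),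
        Set.ncard_insert_of_notMem (by simp [huvne, huw]) (Set.toFinite _),
        Set.ncard_insert_of_notMem (by simp [hvwne]) (Set.toFinite _),
        Set.ncard_singleton]
  omega
end

section
/- Let B be a complete binary tree of depth at least 13. For every injective assignment t of times to the edges of B, the maximum temporal reachability of (B, t) is at least 8. -/
variable {V : Type*}

/-- The complete binary tree of depth `d`: vertices are binary strings of length at
most `d`, and each vertex is adjacent to its two children (obtained by appending a
bit). -/
def binTree (d : ℕ) : SimpleGraph {l : List Bool // l.length ≤ d} :=
  SimpleGraph.fromRel (fun x y => ∃ b : Bool, y.1 = x.1 ++ [b])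

section Aux
variable {d : ℕ}

instance : Finite {l : List Bool // l.length ≤ d} :=
  (List.finite_length_le Bool d).to_subtype

/-- append a bit to a vertex (identity if at max depth). -/
def ext (x : {l : List Bool // l.length ≤ d}) (b : Bool) : {l : List Bool // l.length ≤ d} :=
  if h : x.1.length < d then ⟨x.1 ++ [b], by simp; omega⟩ else x

lemma ext_val {x : {l : List Bool // l.length ≤ d}} (h : x.1.length < d) (b : Bool) :
    (ext x b).1 = x.1 ++ [b] := by simp [ext, h]

lemma ext_len {x : {l : List Bool // l.length ≤ d}} (h : x.1.length < d) (b : Bool) :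
    (ext x b).1.length = x.1.length + 1 := by simp [ext_val h]

lemma ext_ne_self {x : {l : List Bool // l.length ≤ d}} (h : x.1.length < d) (b : Bool) :
    x ≠ ext x b := by
  intro he
  have := congrArg (fun z => z.1.length) he
  simp [ext_len h] at this

lemma adj_ext {x : {l : List Bool // l.length ≤ d}} (h : x.1.length < d) (b : Bool) :
    (binTree d).Adj x (ext x b) := by
  rw [binTree, SimpleGraph.fromRel_adj]
  exact ⟨ext_ne_self h b, Or.inl ⟨b, ext_val h b⟩⟩

lemma ext_inj {x y : {l : List Bool // l.length ≤ d}} (hx : x.1.length < d)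
    (hy : y.1.length < d) {b b' : Bool} (h : ext x b = ext y b') : x = y ∧ b = b' := by
  have hv : x.1 ++ [b] = y.1 ++ [b'] := by
    rw [← ext_val hx b, ← ext_val hy b', h]
  obtain ⟨h1, h2⟩ := List.append_inj' hv rfl
  exact ⟨Subtype.ext h1, by simpa using h2⟩
end Aux

section Aux2
variable {d : ℕ} (t : Sym2 {l : List Bool // l.length ≤ d} → ℕ)

/-- distinct parent/child edges get distinct times -/
lemma time_ne (ht : Set.InjOn t (binTree d).edgeSet) {x y : {l : List Bool // l.length ≤ d}} (hx : x.1.length < d)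
    (hy : y.1.length < d) {b b' : Bool} (hne : x ≠ y ∨ b ≠ b') :
    t s(x, ext x b) ≠ t s(y, ext y b') := by
  intro he
  have h1 : s(x, ext x b) ∈ (binTree d).edgeSet := (adj_ext hx b)
  have h2 : s(y, ext y b') ∈ (binTree d).edgeSet := (adj_ext hy b')
  have := ht h1 h2 he
  rw [Sym2.eq_iff] at this
  rcases this with ⟨h3, h4⟩ | ⟨h3, h4⟩
  · subst h3
    obtain ⟨-, h5⟩ := ext_inj hx hx h4
    rcases hne with h | h
    · exact h rfl
    · exact h h5
  · -- x = ext y b' and ext x b = y : length contradiction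
    have l1 := congrArg (fun z => z.1.length) h3
    have l2 := congrArg (fun z => z.1.length) h4
    simp only [ext_len hx, ext_len hy] at l1 l2
    omega

/-- chosen bit: the child with smaller edge time -/
noncomputable def cb (x : {l : List Bool // l.length ≤ d}) : Bool :=
  if t s(x, ext x true) < t s(x, ext x false) then true else false

noncomputable def mc (x : {l : List Bool // l.length ≤ d}) := ext x (cb t x)
noncomputable def sib (x : {l : List Bool // l.length ≤ d}) := ext x (!cb t x)

lemma mc_lt_sib (ht : Set.InjOn t (binTree d).edgeSet) {x : {l : List Bool // l.length ≤ d}} (hx : x.1.length < d) :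
    t s(x, mc t x) < t s(x, sib t x) := by
  have hne : t s(x, ext x (cb t x)) ≠ t s(x, ext x (!cb t x)) :=
    time_ne t ht hx hx (Or.inr (by cases cb t x <;> simp))
  unfold mc sib cb at *
  split_ifs at * with h
  · simpa using lt_of_le_of_ne (by simpa using le_of_lt h) hne
  · simpa using lt_of_le_of_ne (by simpa using not_lt.mp h) hne

/-- the min-time path from the root -/
noncomputable def P : ℕ → {l : List Bool // l.length ≤ d}
  | 0 => ⟨[], by simp⟩
  | k+1 => mc t (P k)

/-- sibling of `P (k+1)` -/
noncomputable def W (k : ℕ) : {l : List Bool // l.length ≤ d} := sib t (P t k)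

lemma lenP : ∀ k, k ≤ d → (P t k).1.length = k := by
  intro k
  induction k with
  | zero => intro _; simp [P]
  | succ n ih =>
    intro h
    have hn : (P t n).1.length = n := ih (by omega)
    have hlt : (P t n).1.length < d := by omega
    show (mc t (P t n)).1.length = n + 1
    rw [mc, ext_len hlt, hn]

lemma lenW (k : ℕ) (h : k + 1 ≤ d) : (W t k).1.length = k + 1 := by
  have := lenP t k (by omega)
  rw [W, sib, ext_len (by omega), this]

end Aux2

section Aux3
variable {d : ℕ} (t : Sym2 {l : List Bool // l.length ≤ d} → ℕ)

noncomputable def tau (k : ℕ) : ℕ := t s(P t k, P t (k+1))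
noncomputable def sg (k : ℕ) : ℕ := t s(P t k, W t k)

lemma lenP_lt (k : ℕ) (h : k < d) : (P t k).1.length < d := by rw [lenP t k (le_of_lt h)]; exact h

lemma adjPP (k : ℕ) (h : k < d) : (binTree d).Adj (P t k) (P t (k+1)) :=
  adj_ext (lenP_lt t k h) _

lemma adjPW (k : ℕ) (h : k < d) : (binTree d).Adj (P t k) (W t k) :=
  adj_ext (lenP_lt t k h) _

lemma tau_lt_sg (ht : Set.InjOn t (binTree d).edgeSet) (k : ℕ) (h : k < d) :
    tau t k < sg t k := mc_lt_sib t ht (lenP_lt t k h)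

lemma tcomm (a b : {l : List Bool // l.length ≤ d}) : t s(a, b) = t s(b, a) := by
  rw [Sym2.eq_swap]

lemma P_ne_W (k : ℕ) (h : k < d) : P t (k+1) ≠ W t k := by
  intro he
  obtain ⟨-, hb⟩ := ext_inj (lenP_lt t k h) (lenP_lt t k h) he
  simp at hb

lemma mc_ne_sib {x : {l : List Bool // l.length ≤ d}} (hx : x.1.length < d) :
    mc t x ≠ sib t x := by
  intro he
  obtain ⟨-, hb⟩ := ext_inj hx hx he
  simp at hb

lemma ne_of_len {x y : {l : List Bool // l.length ≤ d}} (h : x.1.length ≠ y.1.length) :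
    x ≠ y := fun he => h (by rw [he])

lemma ext_ne_ext {x y : {l : List Bool // l.length ≤ d}} (hx : x.1.length < d)
    (hy : y.1.length < d) (hne : x ≠ y) (b b' : Bool) : ext x b ≠ ext y b' :=
  fun he => hne (ext_inj hx hy he).1

end Aux3

section Card

lemma eight_le_ncard {α : Type*} [Finite α] {S : Set α} {x1 x2 x3 x4 x5 x6 x7 x8 : α}
    (h1 : x1 ∈ S) (h2 : x2 ∈ S) (h3 : x3 ∈ S) (h4 : x4 ∈ S) (h5 : x5 ∈ S) (h6 : x6 ∈ S)
    (h7 : x7 ∈ S) (h8 : x8 ∈ S)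
    (d12 : x1 ≠ x2) (d13 : x1 ≠ x3) (d14 : x1 ≠ x4) (d15 : x1 ≠ x5) (d16 : x1 ≠ x6)
    (d17 : x1 ≠ x7) (d18 : x1 ≠ x8)
    (d23 : x2 ≠ x3) (d24 : x2 ≠ x4) (d25 : x2 ≠ x5) (d26 : x2 ≠ x6) (d27 : x2 ≠ x7)
    (d28 : x2 ≠ x8)
    (d34 : x3 ≠ x4) (d35 : x3 ≠ x5) (d36 : x3 ≠ x6) (d37 : x3 ≠ x7) (d38 : x3 ≠ x8)
    (d45 : x4 ≠ x5) (d46 : x4 ≠ x6) (d47 : x4 ≠ x7) (d48 : x4 ≠ x8)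
    (d56 : x5 ≠ x6) (d57 : x5 ≠ x7) (d58 : x5 ≠ x8)
    (d67 : x6 ≠ x7) (d68 : x6 ≠ x8)
    (d78 : x7 ≠ x8) : 8 ≤ S.ncard := by
  classical
  have hsub : ↑({x1,x2,x3,x4,x5,x6,x7,x8} : Finset α) ⊆ S := by
    intro y hy
    simp only [Finset.coe_insert, Set.mem_insert_iff, Finset.coe_singleton,
      Set.mem_singleton_iff] at hy
    rcases hy with rfl|rfl|rfl|rfl|rfl|rfl|rfl|rfl <;> assumption
  have hcard : ({x1,x2,x3,x4,x5,x6,x7,x8} : Finset α).card = 8 := by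
    rw [Finset.card_insert_of_notMem (by simp [d12,d13,d14,d15,d16,d17,d18]),
        Finset.card_insert_of_notMem (by simp [d23,d24,d25,d26,d27,d28]),
        Finset.card_insert_of_notMem (by simp [d34,d35,d36,d37,d38]),
        Finset.card_insert_of_notMem (by simp [d45,d46,d47,d48]),
        Finset.card_insert_of_notMem (by simp [d56,d57,d58]),
        Finset.card_insert_of_notMem (by simp [d67,d68]),
        Finset.card_insert_of_notMem (by simp [d78]),
        Finset.card_singleton]
  calc (8:ℕ) = ({x1,x2,x3,x4,x5,x6,x7,x8} : Finset α).card := hcard.symm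
    _ = (↑({x1,x2,x3,x4,x5,x6,x7,x8} : Finset α) : Set α).ncard := (Set.ncard_coe_finset _).symm
    _ ≤ S.ncard := Set.ncard_le_ncard hsub (Set.toFinite S)

end Card

section Main
variable {d : ℕ}

lemma mem_reach {G : SimpleGraph V} {t : Sym2 V → ℕ} {u v : V} {τ : ℕ}
    (h : TReach G t u v τ) : v ∈ reachSet G t u := Or.inr ⟨τ, h⟩

lemma mem_reach_self {G : SimpleGraph V} {t : Sym2 V → ℕ} {u : V} :
    u ∈ reachSet G t u := Or.inl rfl

lemma treach_up {G : SimpleGraph V} {t : Sym2 V → ℕ} {u v w : V} {τ : ℕ}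
    (h : TReach G t u v τ) (hadj : G.Adj w v) (hlt : τ < t s(w, v)) :
    TReach G t u w (t s(w, v)) := by
  have hc : t s(v, w) = t s(w, v) := by rw [Sym2.eq_swap]
  have := TReach.cons h hadj.symm (by rw [hc]; exact hlt)
  rwa [hc] at this

lemma treach_single_up {G : SimpleGraph V} {t : Sym2 V → ℕ} {u v : V}
    (hadj : G.Adj v u) : TReach G t u v (t s(v, u)) := by
  have hc : t s(u, v) = t s(v, u) := by rw [Sym2.eq_swap]
  have := TReach.single (t := t) hadj.symm
  rwa [hc] at this

theorem key (hd : 13 ≤ d) (t : Sym2 {l : List Bool // l.length ≤ d} → ℕ)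
    (ht : Set.InjOn t (binTree d).edgeSet) :
    ∃ v : {l : List Bool // l.length ≤ d}, 8 ≤ (reachSet (binTree d) t v).ncard := by
  classical
  by_cases hex : ∃ a, a ≤ 7 ∧ tau t (a+1) < tau t a
  · obtain ⟨a, ha7, hdesc⟩ := hex
    by_cases hc1 : tau t (a+2) < sg t (a+3)
    · -- Case 1 : start from P (a+2)
      refine ⟨P t (a+2), ?_⟩
      have r1 : TReach (binTree d) t (P t (a+2)) (P t (a+3)) (tau t (a+2)) :=
        TReach.single (adjPP t (a+2) (by omega))
      have r8 : TReach (binTree d) t (P t (a+2)) (W t (a+3)) (sg t (a+3)) :=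
        TReach.cons r1 (adjPW t (a+3) (by omega)) hc1
      have r3 : TReach (binTree d) t (P t (a+2)) (W t (a+2)) (sg t (a+2)) :=
        TReach.single (adjPW t (a+2) (by omega))
      have r4 : TReach (binTree d) t (P t (a+2)) (P t (a+1)) (tau t (a+1)) :=
        treach_single_up (adjPP t (a+1) (by omega))
      have r5 : TReach (binTree d) t (P t (a+2)) (W t (a+1)) (sg t (a+1)) :=
        TReach.cons r4 (adjPW t (a+1) (by omega)) (tau_lt_sg t ht (a+1) (by omega))
      have r6 : TReach (binTree d) t (P t (a+2)) (P t a) (tau t a) :=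
        treach_up r4 (adjPP t a (by omega)) hdesc
      have r7 : TReach (binTree d) t (P t (a+2)) (W t a) (sg t a) :=
        TReach.cons r6 (adjPW t a (by omega)) (tau_lt_sg t ht a (by omega))
      have L1 : (P t (a+2)).1.length = a+2 := lenP t _ (by omega)
      have L2 : (P t (a+3)).1.length = a+3 := lenP t _ (by omega)
      have L3 : (W t (a+2)).1.length = a+3 := lenW t _ (by omega)
      have L4 : (P t (a+1)).1.length = a+1 := lenP t _ (by omega)
      have L5 : (W t (a+1)).1.length = a+2 := lenW t _ (by omega)
      have L6 : (P t a).1.length = a := lenP t _ (by omega)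
      have L7 : (W t a).1.length = a+1 := lenW t _ (by omega)
      have L8 : (W t (a+3)).1.length = a+4 := lenW t _ (by omega)
      exact eight_le_ncard mem_reach_self (mem_reach r1) (mem_reach r3) (mem_reach r4)
          (mem_reach r5) (mem_reach r6) (mem_reach r7) (mem_reach r8)
          (ne_of_len (by rw [L1, L2]; omega))
          (ne_of_len (by rw [L1, L3]; omega))
          (ne_of_len (by rw [L1, L4]; omega))
          (P_ne_W t (a+1) (by omega))
          (ne_of_len (by rw [L1, L6]; omega))
          (ne_of_len (by rw [L1, L7]; omega))
          (ne_of_len (by rw [L1, L8]; omega))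
          (P_ne_W t (a+2) (by omega))
          (ne_of_len (by rw [L2, L4]; omega))
          (ne_of_len (by rw [L2, L5]; omega))
          (ne_of_len (by rw [L2, L6]; omega))
          (ne_of_len (by rw [L2, L7]; omega))
          (ne_of_len (by rw [L2, L8]; omega))
          (ne_of_len (by rw [L3, L4]; omega))
          (ne_of_len (by rw [L3, L5]; omega))
          (ne_of_len (by rw [L3, L6]; omega))
          (ne_of_len (by rw [L3, L7]; omega))
          (ne_of_len (by rw [L3, L8]; omega))
          (ne_of_len (by rw [L4, L5]; omega))
          (ne_of_len (by rw [L4, L6]; omega))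
          (P_ne_W t a (by omega))
          (ne_of_len (by rw [L4, L8]; omega))
          (ne_of_len (by rw [L5, L6]; omega))
          (ne_of_len (by rw [L5, L7]; omega))
          (ne_of_len (by rw [L5, L8]; omega))
          (ne_of_len (by rw [L6, L7]; omega))
          (ne_of_len (by rw [L6, L8]; omega))
          (ne_of_len (by rw [L7, L8]; omega))
    · have hc1' : sg t (a+3) < tau t (a+2) :=
        lt_of_le_of_ne (Nat.not_lt.mp hc1)
          (time_ne t ht (lenP_lt t (a+3) (by omega)) (lenP_lt t (a+2) (by omega))
            (Or.inl (ne_of_len (by rw [lenP t _ (by omega : a+3 ≤ d), lenP t _ (by omega : a+2 ≤ d)]; omega))))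
      have hWlen : (W t (a+3)).1.length < d := by rw [lenW t _ (by omega)]; omega
      by_cases hc2 : ∃ b : Bool, sg t (a+3) < t s(W t (a+3), ext (W t (a+3)) b)
      · -- Case 2 : start from P (a+4)
        obtain ⟨b, hb⟩ := hc2
        refine ⟨P t (a+4), ?_⟩
        have r2 : TReach (binTree d) t (P t (a+4)) (P t (a+5)) (tau t (a+4)) :=
          TReach.single (adjPP t (a+4) (by omega))
        have r3 : TReach (binTree d) t (P t (a+4)) (W t (a+4)) (sg t (a+4)) :=
          TReach.single (adjPW t (a+4) (by omega))
        have r4 : TReach (binTree d) t (P t (a+4)) (P t (a+3)) (tau t (a+3)) :=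
          treach_single_up (adjPP t (a+3) (by omega))
        have r5 : TReach (binTree d) t (P t (a+4)) (W t (a+3)) (sg t (a+3)) :=
          TReach.cons r4 (adjPW t (a+3) (by omega)) (tau_lt_sg t ht (a+3) (by omega))
        have r6 : TReach (binTree d) t (P t (a+4)) (ext (W t (a+3)) b)
            (t s(W t (a+3), ext (W t (a+3)) b)) :=
          TReach.cons r5 (adj_ext hWlen b) hb
        have r7 : TReach (binTree d) t (P t (a+4)) (P t (a+2)) (tau t (a+2)) :=
          treach_up r4 (adjPP t (a+2) (by omega)) (lt_trans (tau_lt_sg t ht (a+3) (by omega)) hc1')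
        have r8 : TReach (binTree d) t (P t (a+4)) (W t (a+2)) (sg t (a+2)) :=
          TReach.cons r7 (adjPW t (a+2) (by omega)) (tau_lt_sg t ht (a+2) (by omega))
        have L1 : (P t (a+4)).1.length = a+4 := lenP t _ (by omega)
        have L2 : (P t (a+5)).1.length = a+5 := lenP t _ (by omega)
        have L3 : (W t (a+4)).1.length = a+5 := lenW t _ (by omega)
        have L4 : (P t (a+3)).1.length = a+3 := lenP t _ (by omega)
        have L5 : (W t (a+3)).1.length = a+4 := lenW t _ (by omega)
        have L6 : (ext (W t (a+3)) b).1.length = a+5 := by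
          rw [ext_len hWlen, lenW t _ (by omega)]
        have L7 : (P t (a+2)).1.length = a+2 := lenP t _ (by omega)
        have L8 : (W t (a+2)).1.length = a+3 := lenW t _ (by omega)
        exact eight_le_ncard mem_reach_self (mem_reach r2) (mem_reach r3) (mem_reach r4)
            (mem_reach r5) (mem_reach r6) (mem_reach r7) (mem_reach r8)
            (ne_of_len (by rw [L1, L2]; omega))
            (ne_of_len (by rw [L1, L3]; omega))
            (ne_of_len (by rw [L1, L4]; omega))
            (P_ne_W t (a+3) (by omega))
            (ne_of_len (by rw [L1, L6]; omega))
            (ne_of_len (by rw [L1, L7]; omega))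
            (ne_of_len (by rw [L1, L8]; omega))
            (P_ne_W t (a+4) (by omega))
            (ne_of_len (by rw [L2, L4]; omega))
            (ne_of_len (by rw [L2, L5]; omega))
            (ext_ne_ext (lenP_lt t (a+4) (by omega)) hWlen (P_ne_W t (a+3) (by omega)) _ _)
            (ne_of_len (by rw [L2, L7]; omega))
            (ne_of_len (by rw [L2, L8]; omega))
            (ne_of_len (by rw [L3, L4]; omega))
            (ne_of_len (by rw [L3, L5]; omega))
            (ext_ne_ext (lenP_lt t (a+4) (by omega)) hWlen (P_ne_W t (a+3) (by omega)) _ _)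
            (ne_of_len (by rw [L3, L7]; omega))
            (ne_of_len (by rw [L3, L8]; omega))
            (ne_of_len (by rw [L4, L5]; omega))
            (ne_of_len (by rw [L4, L6]; omega))
            (ne_of_len (by rw [L4, L7]; omega))
            (P_ne_W t (a+2) (by omega))
            (ne_of_len (by rw [L5, L6]; omega))
            (ne_of_len (by rw [L5, L7]; omega))
            (ne_of_len (by rw [L5, L8]; omega))
            (ne_of_len (by rw [L6, L7]; omega))
            (ne_of_len (by rw [L6, L8]; omega))
            (ne_of_len (by rw [L7, L8]; omega))
      · -- Case 3 : start from z = mc (W (a+3))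
        push_neg at hc2
        have hstrict : ∀ b : Bool, t s(W t (a+3), ext (W t (a+3)) b) < sg t (a+3) := by
          intro b
          refine lt_of_le_of_ne (hc2 b) ?_
          exact time_ne t ht hWlen (lenP_lt t (a+3) (by omega))
            (Or.inl (ne_of_len (by rw [lenW t _ (by omega : (a+3)+1 ≤ d), lenP t _ (by omega : a+3 ≤ d)]; omega)))
        refine ⟨mc t (W t (a+3)), ?_⟩
        have hlenz : (mc t (W t (a+3))).1.length < d := by
          rw [show mc t (W t (a+3)) = ext (W t (a+3)) (cb t (W t (a+3))) from rfl,
            ext_len hWlen, lenW t _ (by omega)]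
          omega
        have r2 : TReach (binTree d) t (mc t (W t (a+3))) (ext (mc t (W t (a+3))) false)
            (t s(mc t (W t (a+3)), ext (mc t (W t (a+3))) false)) :=
          TReach.single (adj_ext hlenz false)
        have r3 : TReach (binTree d) t (mc t (W t (a+3))) (ext (mc t (W t (a+3))) true)
            (t s(mc t (W t (a+3)), ext (mc t (W t (a+3))) true)) :=
          TReach.single (adj_ext hlenz true)
        have r4 : TReach (binTree d) t (mc t (W t (a+3))) (W t (a+3))
            (t s(W t (a+3), mc t (W t (a+3)))) :=
          treach_single_up (adj_ext hWlen (cb t (W t (a+3))))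
        have r5 : TReach (binTree d) t (mc t (W t (a+3))) (sib t (W t (a+3)))
            (t s(W t (a+3), sib t (W t (a+3)))) :=
          TReach.cons r4 (adj_ext hWlen (!cb t (W t (a+3)))) (mc_lt_sib t ht hWlen)
        have r6 : TReach (binTree d) t (mc t (W t (a+3))) (P t (a+3)) (sg t (a+3)) :=
          treach_up r4 (adjPW t (a+3) (by omega)) (hstrict (cb t (W t (a+3))))
        have r7 : TReach (binTree d) t (mc t (W t (a+3))) (P t (a+2)) (tau t (a+2)) :=
          treach_up r6 (adjPP t (a+2) (by omega)) hc1'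
        have r8 : TReach (binTree d) t (mc t (W t (a+3))) (W t (a+2)) (sg t (a+2)) :=
          TReach.cons r7 (adjPW t (a+2) (by omega)) (tau_lt_sg t ht (a+2) (by omega))
        have L1 : (mc t (W t (a+3))).1.length = a+5 := by
          rw [show mc t (W t (a+3)) = ext (W t (a+3)) (cb t (W t (a+3))) from rfl,
            ext_len hWlen, lenW t _ (by omega)]
        have L2 : (ext (mc t (W t (a+3))) false).1.length = a+6 := by
          rw [ext_len hlenz, L1]
        have L3 : (ext (mc t (W t (a+3))) true).1.length = a+6 := by
          rw [ext_len hlenz, L1]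
        have L4 : (W t (a+3)).1.length = a+4 := lenW t _ (by omega)
        have L5 : (sib t (W t (a+3))).1.length = a+5 := by
          rw [show sib t (W t (a+3)) = ext (W t (a+3)) (!cb t (W t (a+3))) from rfl,
            ext_len hWlen, L4]
        have L6 : (P t (a+3)).1.length = a+3 := lenP t _ (by omega)
        have L7 : (P t (a+2)).1.length = a+2 := lenP t _ (by omega)
        have L8 : (W t (a+2)).1.length = a+3 := lenW t _ (by omega)
        exact eight_le_ncard mem_reach_self (mem_reach r2) (mem_reach r3) (mem_reach r4)
            (mem_reach r5) (mem_reach r6) (mem_reach r7) (mem_reach r8)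
            (ne_of_len (by rw [L1, L2]; omega))
            (ne_of_len (by rw [L1, L3]; omega))
            (ne_of_len (by rw [L1, L4]; omega))
            (mc_ne_sib t hWlen)
            (ne_of_len (by rw [L1, L6]; omega))
            (ne_of_len (by rw [L1, L7]; omega))
            (ne_of_len (by rw [L1, L8]; omega))
            (fun he => absurd (ext_inj hlenz hlenz he).2 (by simp))
            (ne_of_len (by rw [L2, L4]; omega))
            (ne_of_len (by rw [L2, L5]; omega))
            (ne_of_len (by rw [L2, L6]; omega))
            (ne_of_len (by rw [L2, L7]; omega))
            (ne_of_len (by rw [L2, L8]; omega))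
            (ne_of_len (by rw [L3, L4]; omega))
            (ne_of_len (by rw [L3, L5]; omega))
            (ne_of_len (by rw [L3, L6]; omega))
            (ne_of_len (by rw [L3, L7]; omega))
            (ne_of_len (by rw [L3, L8]; omega))
            (ne_of_len (by rw [L4, L5]; omega))
            (ne_of_len (by rw [L4, L6]; omega))
            (ne_of_len (by rw [L4, L7]; omega))
            (ne_of_len (by rw [L4, L8]; omega))
            (ne_of_len (by rw [L5, L6]; omega))
            (ne_of_len (by rw [L5, L7]; omega))
            (ne_of_len (by rw [L5, L8]; omega))
            (ne_of_len (by rw [L6, L7]; omega))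
            (P_ne_W t (a+2) (by omega))
            (ne_of_len (by rw [L7, L8]; omega))
  · -- increasing case : start from the root
    push_neg at hex
    have hinc : ∀ a, a ≤ 7 → tau t a < tau t (a+1) := by
      intro a ha
      refine lt_of_le_of_ne (hex a ha) ?_
      exact time_ne t ht (lenP_lt t a (by omega)) (lenP_lt t (a+1) (by omega))
        (Or.inl (ne_of_len (by rw [lenP t _ (by omega : a ≤ d), lenP t _ (by omega : a+1 ≤ d)]; omega)))
    refine ⟨P t 0, ?_⟩
    have h01 := hinc 0 (by omega)
    have h12 := hinc 1 (by omega)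
    have h23 := hinc 2 (by omega)
    have r2 : TReach (binTree d) t (P t 0) (P t 1) (tau t 0) :=
      TReach.single (adjPP t 0 (by omega))
    have r3 : TReach (binTree d) t (P t 0) (W t 0) (sg t 0) :=
      TReach.single (adjPW t 0 (by omega))
    have r4 : TReach (binTree d) t (P t 0) (P t 2) (tau t 1) :=
      TReach.cons r2 (adjPP t 1 (by omega)) h01
    have r5 : TReach (binTree d) t (P t 0) (W t 1) (sg t 1) :=
      TReach.cons r2 (adjPW t 1 (by omega)) (lt_trans h01 (tau_lt_sg t ht 1 (by omega)))
    have r6 : TReach (binTree d) t (P t 0) (P t 3) (tau t 2) :=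
      TReach.cons r4 (adjPP t 2 (by omega)) h12
    have r7 : TReach (binTree d) t (P t 0) (W t 2) (sg t 2) :=
      TReach.cons r4 (adjPW t 2 (by omega)) (lt_trans h12 (tau_lt_sg t ht 2 (by omega)))
    have r8 : TReach (binTree d) t (P t 0) (P t 4) (tau t 3) :=
      TReach.cons r6 (adjPP t 3 (by omega)) h23
    have L1 : (P t 0).1.length = 0 := lenP t _ (by omega)
    have L2 : (P t 1).1.length = 1 := lenP t _ (by omega)
    have L3 : (W t 0).1.length = 1 := lenW t _ (by omega)
    have L4 : (P t 2).1.length = 2 := lenP t _ (by omega)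
    have L5 : (W t 1).1.length = 2 := lenW t _ (by omega)
    have L6 : (P t 3).1.length = 3 := lenP t _ (by omega)
    have L7 : (W t 2).1.length = 3 := lenW t _ (by omega)
    have L8 : (P t 4).1.length = 4 := lenP t _ (by omega)
    exact eight_le_ncard mem_reach_self (mem_reach r2) (mem_reach r3) (mem_reach r4)
        (mem_reach r5) (mem_reach r6) (mem_reach r7) (mem_reach r8)
        (ne_of_len (by rw [L1, L2]; omega))
        (ne_of_len (by rw [L1, L3]; omega))
        (ne_of_len (by rw [L1, L4]; omega))
        (ne_of_len (by rw [L1, L5]; omega))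
        (ne_of_len (by rw [L1, L6]; omega))
        (ne_of_len (by rw [L1, L7]; omega))
        (ne_of_len (by rw [L1, L8]; omega))
        (P_ne_W t 0 (by omega))
        (ne_of_len (by rw [L2, L4]; omega))
        (ne_of_len (by rw [L2, L5]; omega))
        (ne_of_len (by rw [L2, L6]; omega))
        (ne_of_len (by rw [L2, L7]; omega))
        (ne_of_len (by rw [L2, L8]; omega))
        (ne_of_len (by rw [L3, L4]; omega))
        (ne_of_len (by rw [L3, L5]; omega))
        (ne_of_len (by rw [L3, L6]; omega))
        (ne_of_len (by rw [L3, L7]; omega))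
        (ne_of_len (by rw [L3, L8]; omega))
        (P_ne_W t 1 (by omega))
        (ne_of_len (by rw [L4, L6]; omega))
        (ne_of_len (by rw [L4, L7]; omega))
        (ne_of_len (by rw [L4, L8]; omega))
        (ne_of_len (by rw [L5, L6]; omega))
        (ne_of_len (by rw [L5, L7]; omega))
        (ne_of_len (by rw [L5, L8]; omega))
        (P_ne_W t 2 (by omega))
        (ne_of_len (by rw [L6, L8]; omega))
        (ne_of_len (by rw [L7, L8]; omega))
end Main

/-- On a complete binary tree of depth at least 13, every injective time assignment to
the edges yields maximum temporal reachability at least eight. -/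
theorem stmt_11 (d : ℕ) (hd : 13 ≤ d)
    (t : Sym2 {l : List Bool // l.length ≤ d} → ℕ)
    (ht : Set.InjOn t (binTree d).edgeSet) :
    ∃ v : {l : List Bool // l.length ≤ d}, 8 ≤ (reachSet (binTree d) t v).ncard := by
  exact key hd t ht
end

section
/- Let G be a graph whose edge set is partitioned into matchings M1, ..., Mc (a proper c-edge-colouring). If all edges of M1 are assigned times before all edges of M2, which come before all of M3, etc., and times within each Mi are assigned arbitrarily and injectively, then every vertex's temporal reachability set has cardinality at most 2^c. -/
variable {V : Type*}

/-!
A strict temporal path leaves a vertex along edges of strictly increasing colour: two consecutive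
edges share a vertex, so they cannot have the same colour (colour classes are matchings), and a
later edge of smaller colour would carry a smaller time. Since each vertex has at most one edge of
each colour, the endpoint of the path is determined by its start and its set of colours. Hence a
reachability set is the image of a map defined on the `2 ^ c` sets of colours.
-/

section ColourWalk

variable {ι : Type*} (G : SimpleGraph V) (col : Sym2 V → ι)

def IsMatchingColouring : Prop :=
  ∀ e ∈ G.edgeSet, ∀ e' ∈ G.edgeSet, e ≠ e' → col e = col e' → ∀ a : V, a ∈ e → a ∉ e'

def TimesRespectColours [LT ι] (t : Sym2 V → ℕ) : Prop :=
  ∀ e ∈ G.edgeSet, ∀ e' ∈ G.edgeSet, col e < col e' → t e < t e'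

open Classical in
/-- Junk value `v` when `v` has no edge of colour `i`. -/
noncomputable def colourStep (v : V) (i : ι) : V :=
  if h : ∃ w, G.Adj v w ∧ col s(v, w) = i then h.choose else v

variable {G col}

theorem IsMatchingColouring.eq_of_adj_of_col_eq (hmatch : IsMatchingColouring G col)
    {v w w' : V} (hw : G.Adj v w) (hw' : G.Adj v w') (hcol : col s(v, w) = col s(v, w')) :
    w = w' := by
  by_contra hne
  have hedge : s(v, w) ≠ s(v, w') := fun h => hne (Sym2.congr_right.mp h)
  exact hmatch _ hw _ hw' hedge hcol v (Sym2.mem_mk_left v w) (Sym2.mem_mk_left v w')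

theorem IsMatchingColouring.col_lt_of_t_lt [LinearOrder ι] (hmatch : IsMatchingColouring G col)
    {t : Sym2 V → ℕ} (hord : TimesRespectColours G col t) {e e' : Sym2 V} (he : e ∈ G.edgeSet)
    (he' : e' ∈ G.edgeSet) {a : V} (hae : a ∈ e) (hae' : a ∈ e') (ht : t e < t e') :
    col e < col e' := by
  rcases lt_trichotomy (col e) (col e') with hlt | heq | hgt
  · exact hlt
  · exact absurd hae' (hmatch e he e' he' (by rintro rfl; exact ht.false) heq a hae)
  · exact absurd (hord e' he' e he hgt) ht.not_gt

theorem IsMatchingColouring.colourStep_col_eq (hmatch : IsMatchingColouring G col) {v w : V}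
    (hadj : G.Adj v w) : colourStep G col v (col s(v, w)) = w := by
  have hex : ∃ w', G.Adj v w' ∧ col s(v, w') = col s(v, w) := ⟨w, hadj, rfl⟩
  rw [colourStep, dif_pos hex]
  exact hmatch.eq_of_adj_of_col_eq hex.choose_spec.1 hadj hex.choose_spec.2

variable (G col) [LinearOrder ι]

/-- `foldr` over the decreasing sort of `S` takes the colours of `S` in increasing order. -/
noncomputable def colourWalk (u : V) (S : Finset ι) : V :=
  (S.sort (· ≥ ·)).foldr (fun i v => colourStep G col v i) u

@[simp]
theorem colourWalk_empty (u : V) : colourWalk G col u ∅ = u := by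
  simp [colourWalk]

theorem colourWalk_insert_of_forall_lt (u : V) {S : Finset ι} {a : ι} (h : ∀ b ∈ S, b < a) :
    colourWalk G col u (insert a S) = colourStep G col (colourWalk G col u S) a := by
  rw [colourWalk, Finset.sort_insert _ (fun b hb => (h b hb).le) fun ha => (h a ha).false]
  rfl

variable {G col}

theorem TReach.exists_colourWalk_eq (hmatch : IsMatchingColouring G col) {t : Sym2 V → ℕ}
    (hord : TimesRespectColours G col t) {u v : V} {τ : ℕ} (h : TReach G t u v τ) :
    ∃ S : Finset ι, colourWalk G col u S = v ∧
      ∃ e ∈ G.edgeSet, v ∈ e ∧ t e = τ ∧ ∀ c ∈ S, c ≤ col e := by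
  induction h with
  | @single w hadj =>
    refine ⟨{col s(u, w)}, ?_, s(u, w), hadj, Sym2.mem_mk_right u w, rfl, by simp⟩
    rw [← insert_empty_eq, colourWalk_insert_of_forall_lt G col u (by simp), colourWalk_empty]
    exact hmatch.colourStep_col_eq hadj
  | @cons v w τ _ hadj hlt ih =>
    obtain ⟨S, hwalk, e, he, hve, hte, hS⟩ := ih
    have hcol : col e < col s(v, w) :=
      hmatch.col_lt_of_t_lt hord he hadj hve (Sym2.mem_mk_left v w) (hte ▸ hlt)
    have hS' : ∀ b ∈ S, b < col s(v, w) := fun b hb => (hS b hb).trans_lt hcol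
    refine ⟨insert (col s(v, w)) S, ?_, s(v, w), hadj, Sym2.mem_mk_right v w, rfl, ?_⟩
    · rw [colourWalk_insert_of_forall_lt G col u hS', hwalk]
      exact hmatch.colourStep_col_eq hadj
    · simpa using fun b hb => (hS' b hb).le

theorem reachSet_subset_range_colourWalk (hmatch : IsMatchingColouring G col)
    {t : Sym2 V → ℕ} (hord : TimesRespectColours G col t) (u : V) :
    reachSet G t u ⊆ Set.range (colourWalk G col u) := by
  rintro v (rfl | ⟨τ, h⟩)
  · exact ⟨∅, colourWalk_empty G col v⟩
  · obtain ⟨S, hS, -⟩ := h.exists_colourWalk_eq hmatch hord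
    exact ⟨S, hS⟩

theorem ncard_reachSet_le_two_pow [Fintype ι] (hmatch : IsMatchingColouring G col)
    {t : Sym2 V → ℕ} (hord : TimesRespectColours G col t) (u : V) :
    (reachSet G t u).ncard ≤ 2 ^ Fintype.card ι :=
  calc (reachSet G t u).ncard ≤ (Set.range (colourWalk G col u)).ncard :=
        Set.ncard_le_ncard (reachSet_subset_range_colourWalk hmatch hord u) (Set.finite_range _)
    _ ≤ Nat.card (Finset ι) := by
        rw [← Set.image_univ, ← Set.ncard_univ]
        exact Set.ncard_image_le Set.finite_univ
    _ = 2 ^ Fintype.card ι := by rw [Nat.card_eq_fintype_card, Fintype.card_finset]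

end ColourWalk

theorem stmt_13_general {V : Type*} (G : SimpleGraph V) (cn : ℕ)
    (col : Sym2 V → Fin cn)
    (hmatch : ∀ e ∈ G.edgeSet, ∀ e' ∈ G.edgeSet, e ≠ e' → col e = col e' →
        ∀ a : V, a ∈ e → a ∉ e')
    (t : Sym2 V → ℕ)
    (hord : ∀ e ∈ G.edgeSet, ∀ e' ∈ G.edgeSet, col e < col e' → t e < t e') :
    ∀ v : V, (reachSet G t v).ncard ≤ 2 ^ cn := by
  intro v
  simpa using ncard_reachSet_le_two_pow (col := col) hmatch hord v

/-- If the edges of `G` are properly coloured with `cn` colours (each colour class a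
matching) and the injective time assignment `t` orders all edges of each colour class
before all edges of every later colour class, then every temporal reachability set has
cardinality at most `2 ^ cn`. -/
theorem stmt_13 {V : Type*} [Fintype V] (G : SimpleGraph V) (cn : ℕ)
    (col : Sym2 V → Fin cn)
    (hmatch : ∀ e ∈ G.edgeSet, ∀ e' ∈ G.edgeSet, e ≠ e' → col e = col e' →
        ∀ a : V, a ∈ e → a ∉ e')
    (t : Sym2 V → ℕ) (ht : Set.InjOn t G.edgeSet)
    (hord : ∀ e ∈ G.edgeSet, ∀ e' ∈ G.edgeSet, col e < col e' → t e < t e') :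
    ∀ v : V, (reachSet G t v).ncard ≤ 2 ^ cn :=
  stmt_13_general G cn col hmatch t hord
end

section
/- Let (G, E, t) be a temporal graph with singleton edge classes and suppose the maximum temporal reachability of (G, E, t) is at most k. Let v be a leaf with neighbour u, and let t' be the assignment obtained from t by moving edge uv to the earliest time (before all other edges), keeping the relative order of other edges. Then the maximum temporal reachability of (G, E, t') is also at most k. -/
variable {V : Type*}

/-- Moving the leaf edge `uv` (where `v` is a leaf with unique neighbour `u`) to the
earliest time, while preserving the relative order of all other edges, does not
increase the maximum temporal reachability. -/
theorem stmt_15 {V : Type*} [Fintype V] (G : SimpleGraph V)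
    (t t' : Sym2 V → ℕ)
    (ht : Set.InjOn t G.edgeSet) (ht' : Set.InjOn t' G.edgeSet)
    (u v : V) (hleaf : G.neighborSet v = {u})
    (hfirst : ∀ e ∈ G.edgeSet, e ≠ s(u, v) → t' s(u, v) < t' e)
    (horder : ∀ e ∈ G.edgeSet, ∀ e' ∈ G.edgeSet, e ≠ s(u, v) → e' ≠ s(u, v) →
        (t' e < t' e' ↔ t e < t e'))
    (k : ℕ) (hk : ∀ w : V, (reachSet G t w).ncard ≤ k) :
    ∀ w : V, (reachSet G t' w).ncard ≤ k := by
  classical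
  have hvu : G.Adj v u := by
    have : u ∈ G.neighborSet v := by rw [hleaf]; rfl
    exact this
  have huv : G.Adj u v := hvu.symm
  have hnv : ∀ x, G.Adj v x → x = u := by
    intro x hx
    have : x ∈ G.neighborSet v := hx
    rw [hleaf] at this
    exact this
  intro w
  -- key lemma
  have key : ∀ x τ, TReach G t' w x τ →
      (τ = t' s(u, v) ∧ ((w = u ∧ x = v) ∨ (w = v ∧ x = u))) ∨
      (∃ e ∈ G.edgeSet, e ≠ s(u, v) ∧ τ = t' e ∧
        TReach G t (if w = v then u else w) x (t e)) := by
    intro x τ hT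
    induction hT with
    | @single y h =>
      by_cases hc : s(w, y) = s(u, v)
      · left
        refine ⟨by rw [hc], ?_⟩
        rcases Sym2.eq_iff.mp hc with ⟨hw, hy⟩ | ⟨hw, hy⟩
        · exact Or.inl ⟨hw, hy⟩
        · exact Or.inr ⟨hw, hy⟩
      · right
        refine ⟨s(w, y), h, hc, rfl, ?_⟩
        have hwv : w ≠ v := by
          rintro rfl
          exact hc (by rw [hnv y h]; exact Sym2.eq_swap)
        rw [if_neg hwv]
        exact TReach.single h
    | @cons y z τ₀ h hadj hlt ih =>
      have hyz : s(y, z) ≠ s(u, v) := by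
        intro hc
        rcases ih with ⟨hτ, _⟩ | ⟨e, he, hne, hτ, _⟩
        · rw [hτ, ← hc] at hlt; exact lt_irrefl _ hlt
        · have := hfirst e he hne
          rw [← hτ, ← hc] at this
          exact absurd (hlt.trans this) (lt_irrefl _)
      rcases ih with ⟨hτ, ⟨hw, hy⟩ | ⟨hw, hy⟩⟩ | ⟨e, he, hne, hτ, hr⟩
      · -- w = u, y = v : next edge from v would be uv again, contradiction
        exfalso
        apply hyz
        rw [hy, hnv z (hy ▸ hadj)]
        exact Sym2.eq_swap
      · -- w = v, y = u
        right
        refine ⟨s(y, z), hadj, hyz, rfl, ?_⟩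
        rw [if_pos hw, ← hy]
        exact TReach.single hadj
      · right
        refine ⟨s(y, z), hadj, hyz, rfl, ?_⟩
        have hlt' : t e < t s(y, z) :=
          (horder e he s(y, z) hadj hne hyz).mp (hτ ▸ hlt)
        exact TReach.cons hr hadj hlt'
  -- containment
  have hsub : reachSet G t' w ⊆ reachSet G t (if w = v then u else w) := by
    intro x hx
    rcases hx with hx | ⟨τ, hT⟩
    · by_cases hwv : w = v
      · rw [if_pos hwv]
        exact Or.inr ⟨_, by rw [hx, hwv]; exact TReach.single huv⟩
      · rw [if_neg hwv]
        exact Or.inl hx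
    · rcases key x τ hT with ⟨_, ⟨hw, hx⟩ | ⟨hw, hx⟩⟩ | ⟨e, _, _, _, hr⟩
      · have hwv : w ≠ v := by rw [hw]; exact huv.ne
        rw [if_neg hwv, hw, hx]
        exact Or.inr ⟨_, TReach.single huv⟩
      · rw [if_pos hw, hx]
        exact Or.inl rfl
      · exact Or.inr ⟨_, hr⟩
  calc (reachSet G t' w).ncard ≤ (reachSet G t (if w = v then u else w)).ncard :=
        Set.ncard_le_ncard hsub (Set.toFinite _)
    _ ≤ k := hk _
end

section
/- Suppose edge subsets Ei and Ej of a temporal graph (G, 𝓔, t) are active at consecutive timesteps and no edge of Ei is incident to any edge of Ej. Then swapping the timesteps assigned to Ei and Ej does not change the temporal reachability set of any vertex of G. -/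
variable {V : Type*}

lemma treach_swap {V : Type*} (G : SimpleGraph V) (t : Sym2 V → ℕ) (τ0 : ℕ)
    (hind : ∀ e ∈ G.edgeSet, ∀ e' ∈ G.edgeSet, t e = τ0 → t e' = τ0 + 1 →
        ∀ a : V, a ∈ e → a ∉ e')
    {u v : V} {τ : ℕ} (h : TReach G t u v τ) :
    (∃ e ∈ G.edgeSet, v ∈ e ∧ t e = τ) ∧
      TReach G (fun e => if t e = τ0 then τ0 + 1
        else if t e = τ0 + 1 then τ0 else t e) u v
        (if τ = τ0 then τ0 + 1 else if τ = τ0 + 1 then τ0 else τ) := by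
  induction h with
  | @single v hadj =>
    refine ⟨⟨s(u, v), G.mem_edgeSet.mpr hadj, by simp, rfl⟩, ?_⟩
    exact TReach.single hadj
  | @cons v w τ h hadj hlt ih =>
    obtain ⟨⟨e, he, hve, hte⟩, ih2⟩ := ih
    have hnot : ¬ (τ = τ0 ∧ t s(v, w) = τ0 + 1) := by
      rintro ⟨h1, h2⟩
      exact hind e he s(v, w) (G.mem_edgeSet.mpr hadj) (hte.trans h1)
        h2 v hve (by simp)
    refine ⟨⟨s(v, w), G.mem_edgeSet.mpr hadj, by simp, rfl⟩, ?_⟩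
    refine TReach.cons ih2 hadj ?_
    split_ifs with h1 h2 h3 h4 h5 h6 h7 h8 <;> omega

/-- If the edge classes active at the consecutive timesteps `τ0` and `τ0 + 1` contain no
pair of incident edges, then swapping these two timesteps leaves every temporal
reachability set unchanged.  (Here `t` assigns to each edge the timestep of its class;
edges in the same class get the same time.) -/
theorem stmt_16 {V : Type*} (G : SimpleGraph V) (t : Sym2 V → ℕ) (τ0 : ℕ)
    (hind : ∀ e ∈ G.edgeSet, ∀ e' ∈ G.edgeSet, t e = τ0 → t e' = τ0 + 1 →
        ∀ a : V, a ∈ e → a ∉ e') :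
    ∀ v : V, reachSet G t v =
      reachSet G (fun e => if t e = τ0 then τ0 + 1
        else if t e = τ0 + 1 then τ0 else t e) v := by
  intro u
  set t' : Sym2 V → ℕ := fun e => if t e = τ0 then τ0 + 1
      else if t e = τ0 + 1 then τ0 else t e with ht'
  have hind' : ∀ e ∈ G.edgeSet, ∀ e' ∈ G.edgeSet, t' e = τ0 → t' e' = τ0 + 1 →
      ∀ a : V, a ∈ e → a ∉ e' := by
    intro e he e' he' h1 h2 a ha ha'
    simp only [ht'] at h1 h2
    have h1' : t e = τ0 + 1 := by split_ifs at h1 <;> omega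
    have h2' : t e' = τ0 := by split_ifs at h2 <;> omega
    exact hind e' he' e he h2' h1' a ha' ha
  have ht'' : (fun e => if t' e = τ0 then τ0 + 1
      else if t' e = τ0 + 1 then τ0 else t' e) = t := by
    funext e
    simp only [ht']
    split_ifs <;> omega
  ext w
  constructor
  · rintro (rfl | ⟨τ, h⟩)
    · exact Or.inl rfl
    · exact Or.inr ⟨_, (treach_swap G t τ0 hind h).2⟩
  · rintro (rfl | ⟨τ, h⟩)
    · exact Or.inl rfl
    · have := (treach_swap G t' τ0 hind' h).2
      rw [ht''] at this
      exact Or.inr ⟨_, this⟩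
end

section
/- Let (G, 𝓔) be a graph with a family of edge classes, let H be the edge-class interaction graph (vertices are classes, adjacent iff the classes contain incident edges), and let d be the maximum, over classes E' ∈ 𝓔, of the maximum degree of the graph (V, E'). Then there exists a bijective time assignment t: 𝓔 → {1,...,|𝓔|} such that the maximum temporal reachability of (G, 𝓔, t) is at most (d+1)^{χ(H)}, where χ(H) is the chromatic number of H. -/
variable {V : Type*}

open scoped Classical
/-- Vertices reachable from `u` using edges whose classes have colours `< k`,
colours used in increasing order. -/
noncomputable def Rset {V : Type*} [Fintype V] (G : SimpleGraph V) {m χ : ℕ}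
    (cls : Sym2 V → Fin m) (col : Fin m → Fin χ) (u : V) : ℕ → Finset V
  | 0 => {u}
  | k + 1 => Rset G cls col u k ∪ (Rset G cls col u k).biUnion
      (fun v => Finset.univ.filter (fun w => G.Adj v w ∧ ((col (cls s(v, w))) : ℕ) = k))

lemma Rset_mono {V : Type*} [Fintype V] (G : SimpleGraph V) {m χ : ℕ}
    (cls : Sym2 V → Fin m) (col : Fin m → Fin χ) (u : V) :
    Monotone (Rset G cls col u) := by
  apply monotone_nat_of_le_succ
  intro k
  exact Finset.subset_union_left

lemma Rset_card {V : Type*} [Fintype V] (G : SimpleGraph V) {m χ d : ℕ}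
    (cls : Sym2 V → Fin m) (col : Fin m → Fin χ) (u : V)
    (hN : ∀ (v : V) (k : ℕ),
      (Finset.univ.filter (fun w => G.Adj v w ∧ ((col (cls s(v, w))) : ℕ) = k)).card ≤ d) :
    ∀ k, (Rset G cls col u k).card ≤ (d + 1) ^ k := by
  intro k
  induction k with
  | zero => simp [Rset]
  | succ k ih =>
    classical
    have h1 : (Rset G cls col u (k + 1)).card ≤
        (Rset G cls col u k).card +
        ((Rset G cls col u k).biUnion
          (fun v => Finset.univ.filter (fun w => G.Adj v w ∧ ((col (cls s(v, w))) : ℕ) = k))).card := by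
      rw [Rset]
      exact Finset.card_union_le _ _
    have h2 : ((Rset G cls col u k).biUnion
          (fun v => Finset.univ.filter (fun w => G.Adj v w ∧ ((col (cls s(v, w))) : ℕ) = k))).card ≤
        (Rset G cls col u k).card * d := by
      refine le_trans (Finset.card_biUnion_le) ?_
      calc ∑ v ∈ Rset G cls col u k,
            (Finset.univ.filter (fun w => G.Adj v w ∧ ((col (cls s(v, w))) : ℕ) = k)).card
          ≤ ∑ _v ∈ Rset G cls col u k, d := Finset.sum_le_sum (fun v _ => hN v k)
        _ = (Rset G cls col u k).card * d := by simp [Finset.sum_const, mul_comm]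
    calc (Rset G cls col u (k + 1)).card
        ≤ (Rset G cls col u k).card + (Rset G cls col u k).card * d := le_trans h1 (by omega)
      _ = (Rset G cls col u k).card * (d + 1) := by ring
      _ ≤ (d + 1) ^ k * (d + 1) := Nat.mul_le_mul_right _ ih
      _ = (d + 1) ^ (k + 1) := by ring

/-- Let the edges of `G` be partitioned into `m` classes via `cls`, let every vertex be
incident with at most `d` edges of any single class, and suppose the edge-class
interaction graph admits a proper colouring `col` with `χ` colours (classes containing
incident edges get distinct colours).  Then there is a bijective time assignment to the
classes such that the maximum temporal reachability is at most `(d + 1) ^ χ`. -/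
theorem stmt_18 {V : Type*} [Fintype V] (G : SimpleGraph V) (m χ d : ℕ)
    (cls : Sym2 V → Fin m)
    (hd : ∀ v : V, ∀ i : Fin m,
        ({w ∈ G.neighborSet v | cls s(v, w) = i}).ncard ≤ d)
    (col : Fin m → Fin χ)
    (hcol : ∀ e ∈ G.edgeSet, ∀ e' ∈ G.edgeSet, cls e ≠ cls e' →
        (∃ a : V, a ∈ e ∧ a ∈ e') → col (cls e) ≠ col (cls e')) :
    ∃ t : Equiv.Perm (Fin m),
      ∀ v : V, (reachSet G (fun e => ((t (cls e) : Fin m) : ℕ)) v).ncard ≤ (d + 1) ^ χ := by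
  classical
  -- classes with the same colour containing edges at a common vertex coincide
  have hcls : ∀ ⦃v w w' : V⦄, G.Adj v w → G.Adj v w' →
      col (cls s(v, w)) = col (cls s(v, w')) → cls s(v, w) = cls s(v, w') := by
    intro v w w' h h' hc
    by_contra hne
    exact hcol s(v, w) (G.mem_edgeSet.mpr h) s(v, w') (G.mem_edgeSet.mpr h') hne
      ⟨v, by simp, by simp⟩ hc
  -- each "colour-k neighbourhood" has size at most d
  have hN : ∀ (v : V) (k : ℕ),
      (Finset.univ.filter (fun w => G.Adj v w ∧ ((col (cls s(v, w))) : ℕ) = k)).card ≤ d := by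
    intro v k
    set S := Finset.univ.filter (fun w => G.Adj v w ∧ ((col (cls s(v, w))) : ℕ) = k) with hS
    rcases S.eq_empty_or_nonempty with he | ⟨w0, hw0⟩
    · simp [he]
    · rw [hS, Finset.mem_filter] at hw0
      obtain ⟨-, hadj0, hc0⟩ := hw0
      have hsub : (S : Set V) ⊆ {w ∈ G.neighborSet v | cls s(v, w) = cls s(v, w0)} := by
        intro w hw
        rw [Finset.mem_coe, hS, Finset.mem_filter] at hw
        obtain ⟨-, hadj, hc⟩ := hw
        exact ⟨hadj, hcls hadj hadj0 (Fin.ext (hc.trans hc0.symm))⟩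
      have hfin : ({w ∈ G.neighborSet v | cls s(v, w) = cls s(v, w0)}).Finite :=
        Set.toFinite _
      calc S.card = (S : Set V).ncard := (Set.ncard_coe_finset S).symm
        _ ≤ ({w ∈ G.neighborSet v | cls s(v, w) = cls s(v, w0)}).ncard :=
            Set.ncard_le_ncard hsub hfin
        _ ≤ d := hd v (cls s(v, w0))
  -- the time assignment: inverse of the sorting permutation of `col`
  refine ⟨(Tuple.sort col)⁻¹, ?_⟩
  set t : Equiv.Perm (Fin m) := (Tuple.sort col)⁻¹ with ht
  have hmono : ∀ i j : Fin m, (t i : ℕ) < (t j : ℕ) → col i ≤ col j := by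
    intro i j hij
    have := Tuple.monotone_sort col (a := t i) (b := t j) (le_of_lt (by exact_mod_cast hij))
    simpa [ht, Function.comp] using this
  -- key: along incident edges, increasing time means strictly increasing colour
  have hkey : ∀ (a v w : V), G.Adj a v → G.Adj v w →
      ((t (cls s(a, v)) : Fin m) : ℕ) < ((t (cls s(v, w)) : Fin m) : ℕ) →
      ((col (cls s(a, v))) : ℕ) < ((col (cls s(v, w))) : ℕ) := by
    intro a v w h1 h2 hlt
    have hne : cls s(a, v) ≠ cls s(v, w) := by
      intro h; rw [h] at hlt; exact lt_irrefl _ hlt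
    have hle : col (cls s(a, v)) ≤ col (cls s(v, w)) := hmono _ _ hlt
    have hneq : col (cls s(a, v)) ≠ col (cls s(v, w)) :=
      hcol _ (G.mem_edgeSet.mpr h1) _ (G.mem_edgeSet.mpr h2) hne ⟨v, by simp, by simp⟩
    exact_mod_cast lt_of_le_of_ne hle hneq
  intro u
  set time : Sym2 V → ℕ := fun e => ((t (cls e) : Fin m) : ℕ) with htime
  -- every vertex reached is in the appropriate level set
  have hreach : ∀ (v : V) (τ : ℕ), TReach G time u v τ →
      ∃ a : V, G.Adj a v ∧ τ = time s(a, v) ∧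
        v ∈ Rset G cls col u (((col (cls s(a, v))) : ℕ) + 1) := by
    intro v τ h
    induction h with
    | @single v h =>
      refine ⟨u, h, rfl, ?_⟩
      rw [Rset]
      apply Finset.mem_union_right
      rw [Finset.mem_biUnion]
      refine ⟨u, ?_, ?_⟩
      · exact Rset_mono G cls col u (Nat.zero_le _) (by simp [Rset])
      · simp [h]
    | @cons v w τ h hadj hlt ih =>
      obtain ⟨a, hav, hτ, hv⟩ := ih
      refine ⟨v, hadj, rfl, ?_⟩
      have hcc : ((col (cls s(a, v))) : ℕ) < ((col (cls s(v, w))) : ℕ) := by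
        apply hkey a v w hav hadj
        rw [hτ] at hlt
        exact hlt
      rw [Rset]
      apply Finset.mem_union_right
      rw [Finset.mem_biUnion]
      refine ⟨v, Rset_mono G cls col u (by omega) hv, ?_⟩
      simp [hadj]
  -- wrap up cardinalities
  have hsub : reachSet G time u ⊆ (Rset G cls col u χ : Set V) := by
    intro v hv
    rcases hv with h | ⟨τ, hτ⟩
    · rw [h]
      exact Rset_mono G cls col u (Nat.zero_le _) (by simp [Rset])
    · obtain ⟨a, -, -, hv⟩ := hreach v τ hτ
      exact Rset_mono G cls col u (by have := (col (cls s(a, v))).isLt; omega) hv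
  calc (reachSet G time u).ncard
      ≤ ((Rset G cls col u χ : Set V)).ncard := Set.ncard_le_ncard hsub (Set.toFinite _)
    _ = (Rset G cls col u χ).card := Set.ncard_coe_finset _
    _ ≤ (d + 1) ^ χ := Rset_card G cls col u hN χ
end

section
/- Let G consist of a clique on r vertices where each clique vertex additionally has s pendant leaves. If all clique edges are active (in any injective ordering) before all leaf edges, then every clique vertex temporally reaches all r(s+1) vertices of G; whereas if all leaf edges are active before all clique edges, then no vertex temporally reaches more than r + s vertices. -/
variable {V : Type*}

/-- The graph consisting of a clique on `r` vertices, each clique vertex `i` having `s`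
pendant leaves `(i, j)`. -/
def cliqueLeaves (r s : ℕ) : SimpleGraph (Fin r ⊕ Fin r × Fin s) :=
  SimpleGraph.fromRel (fun x y =>
    (∃ i i' : Fin r, i ≠ i' ∧ x = Sum.inl i ∧ y = Sum.inl i') ∨
    (∃ (i : Fin r) (j : Fin s), x = Sum.inl i ∧ y = Sum.inr (i, j)))

lemma adj_inl_inl {r s : ℕ} {i i' : Fin r} :
    (cliqueLeaves r s).Adj (Sum.inl i) (Sum.inl i') ↔ i ≠ i' := by
  simp [cliqueLeaves, SimpleGraph.fromRel_adj]; aesop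

lemma adj_inl_inr {r s : ℕ} {i i' : Fin r} {j : Fin s} :
    (cliqueLeaves r s).Adj (Sum.inl i) (Sum.inr (i', j)) ↔ i = i' := by
  simp [cliqueLeaves, SimpleGraph.fromRel_adj]; aesop

lemma not_adj_inr_inr {r s : ℕ} {p q : Fin r × Fin s} :
    ¬ (cliqueLeaves r s).Adj (Sum.inr p) (Sum.inr q) := by
  simp [cliqueLeaves, SimpleGraph.fromRel_adj]

lemma key_s19 {r s : ℕ} {t : Sym2 (Fin r ⊕ Fin r × Fin s) → ℕ}
    (H : ∀ e ∈ (cliqueLeaves r s).edgeSet, ∀ e' ∈ (cliqueLeaves r s).edgeSet,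
        (∃ p : Fin r × Fin s, Sum.inr p ∈ e) → (¬ ∃ p : Fin r × Fin s, Sum.inr p ∈ e') →
        t e < t e')
    {v w : Fin r ⊕ Fin r × Fin s} {τ : ℕ} (h : TReach (cliqueLeaves r s) t v w τ)
    (i0 : Fin r) (hv : v = Sum.inl i0 ∨ ∃ j0, v = Sum.inr (i0, j0)) :
    ((∃ k, w = Sum.inl k) ∧
       ((∃ a b : Fin r, a ≠ b ∧ τ = t s(Sum.inl a, Sum.inl b)) ∨
        ((∃ j0, v = Sum.inr (i0, j0)) ∧ w = Sum.inl i0 ∧ τ = t s(v, w)))) ∨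
    (∃ j, w = Sum.inr (i0, j) ∧ τ = t s(Sum.inl i0, w)) := by
  induction h with
  | @single w hadj =>
    rcases hv with hv | ⟨j0, hv⟩
    · subst hv
      cases w with
      | inl k =>
        left
        exact ⟨⟨k, rfl⟩, Or.inl ⟨i0, k, adj_inl_inl.mp hadj, rfl⟩⟩
      | inr p =>
        right
        obtain ⟨i', j⟩ := p
        have := adj_inl_inr.mp hadj
        subst this
        exact ⟨j, rfl, rfl⟩
    · subst hv
      cases w with
      | inl k =>
        have : k = i0 := adj_inl_inr.mp hadj.symm
        subst this
        exact Or.inl ⟨⟨k, rfl⟩, Or.inr ⟨⟨j0, rfl⟩, rfl, rfl⟩⟩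
      | inr p => exact absurd hadj not_adj_inr_inr
  | @cons x w τp hr hadj hlt ih =>
    rcases ih with ⟨⟨k, hx⟩, hcase⟩ | ⟨j, hx, hτ⟩
    · subst hx
      cases w with
      | inl k' =>
        left
        refine ⟨⟨k', rfl⟩, Or.inl ⟨k, k', adj_inl_inl.mp hadj, rfl⟩⟩
      | inr p =>
        obtain ⟨i', j'⟩ := p
        have hk : k = i' := adj_inl_inr.mp hadj
        subst hk
        rcases hcase with ⟨a, b, hab, hτp⟩ | ⟨⟨j0, hvv⟩, hwk, hτp⟩
        · -- clique time before leaf time: contradiction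
          exfalso
          have h1 : s(Sum.inl k, (Sum.inr (k, j') : Fin r ⊕ Fin r × Fin s)) ∈
              (cliqueLeaves r s).edgeSet := by
            rw [SimpleGraph.mem_edgeSet]; exact adj_inl_inr.mpr rfl
          have h2 : s((Sum.inl a : Fin r ⊕ Fin r × Fin s), Sum.inl b) ∈
              (cliqueLeaves r s).edgeSet := by
            rw [SimpleGraph.mem_edgeSet]; exact adj_inl_inl.mpr hab
          have := H _ h1 _ h2 ⟨(k, j'), by simp⟩ (by simp)
          omega
        · -- v is a leaf of i0, w_prev = inl i0, so k = i0
          have hk0 : k = i0 := Sum.inl.inj hwk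
          subst hk0
          exact Or.inr ⟨j', rfl, rfl⟩
    · -- from a leaf: impossible
      exfalso
      subst hx
      cases w with
      | inl k =>
        have hk : k = i0 := adj_inl_inr.mp hadj.symm
        subst hk
        rw [hτ] at hlt
        rw [Sym2.eq_swap] at hlt
        exact Nat.lt_irrefl _ hlt
      | inr p => exact absurd hadj not_adj_inr_inr

/-- In the clique-with-pendant-leaves graph (which has `r * (s + 1)` vertices):
if all clique edges are active before all leaf edges, every clique vertex temporally
reaches every vertex; if all leaf edges are active before all clique edges, no vertex
temporally reaches more than `r + s` vertices. -/
theorem stmt_19 (r s : ℕ) (t : Sym2 (Fin r ⊕ Fin r × Fin s) → ℕ)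
    (ht : Set.InjOn t (cliqueLeaves r s).edgeSet) :
    Fintype.card (Fin r ⊕ Fin r × Fin s) = r * (s + 1) ∧
    ((∀ e ∈ (cliqueLeaves r s).edgeSet, ∀ e' ∈ (cliqueLeaves r s).edgeSet,
        (¬ ∃ p : Fin r × Fin s, Sum.inr p ∈ e) → (∃ p : Fin r × Fin s, Sum.inr p ∈ e') →
        t e < t e') →
      ∀ i : Fin r, reachSet (cliqueLeaves r s) t (Sum.inl i) = Set.univ) ∧
    ((∀ e ∈ (cliqueLeaves r s).edgeSet, ∀ e' ∈ (cliqueLeaves r s).edgeSet,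
        (∃ p : Fin r × Fin s, Sum.inr p ∈ e) → (¬ ∃ p : Fin r × Fin s, Sum.inr p ∈ e') →
        t e < t e') →
      ∀ v : Fin r ⊕ Fin r × Fin s, (reachSet (cliqueLeaves r s) t v).ncard ≤ r + s) := by
  refine ⟨by simp [Fintype.card_sum, Fintype.card_prod]; ring, ?_, ?_⟩
  · -- clique first
    intro H i
    ext w
    simp only [Set.mem_univ, iff_true, reachSet, Set.mem_setOf_eq]
    cases w with
    | inl i' =>
      by_cases h : i' = i
      · exact Or.inl (by rw [h])
      · exact Or.inr ⟨_, TReach.single (adj_inl_inl.mpr (Ne.symm h))⟩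
    | inr p =>
      obtain ⟨i', j⟩ := p
      by_cases h : i = i'
      · subst h
        exact Or.inr ⟨_, TReach.single (adj_inl_inr.mpr rfl)⟩
      · refine Or.inr ⟨_, TReach.cons (TReach.single (adj_inl_inl.mpr h))
          (adj_inl_inr.mpr rfl) ?_⟩
        have h1 : s((Sum.inl i : Fin r ⊕ Fin r × Fin s), Sum.inl i') ∈
            (cliqueLeaves r s).edgeSet := by
          rw [SimpleGraph.mem_edgeSet]; exact adj_inl_inl.mpr h
        have h2 : s((Sum.inl i' : Fin r ⊕ Fin r × Fin s), Sum.inr (i', j)) ∈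
            (cliqueLeaves r s).edgeSet := by
          rw [SimpleGraph.mem_edgeSet]; exact adj_inl_inr.mpr rfl
        exact H _ h1 _ h2 (by simp) ⟨(i', j), by simp⟩
  · -- leaves first
    intro H v
    obtain ⟨i0, hv⟩ : ∃ i0 : Fin r,
        v = Sum.inl i0 ∨ ∃ j0, v = Sum.inr (i0, j0) := by
      cases v with
      | inl i => exact ⟨i, Or.inl rfl⟩
      | inr p => exact ⟨p.1, Or.inr ⟨p.2, by simp⟩⟩
    set S : Finset (Fin r ⊕ Fin r × Fin s) :=
      Finset.image Sum.inl Finset.univ ∪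
      Finset.image (fun j => Sum.inr (i0, j)) Finset.univ with hS
    have hsub : reachSet (cliqueLeaves r s) t v ⊆ ↑S := by
      intro w hw
      rcases hw with hw | ⟨τ, hw⟩
      · subst hw
        rcases hv with hv | ⟨j0, hv⟩ <;> subst hv <;> simp [hS]
      · rcases key_s19 H hw i0 hv with ⟨⟨k, hk⟩, -⟩ | ⟨j, hj, -⟩
        · subst hk; simp [hS]
        · subst hj; simp [hS]
    calc (reachSet (cliqueLeaves r s) t v).ncard ≤ (↑S : Set _).ncard :=
          Set.ncard_le_ncard hsub (Set.toFinite _)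
      _ = S.card := Set.ncard_coe_finset S
      _ ≤ r + s := by
          refine le_trans (Finset.card_union_le _ _) ?_
          have h1 : (Finset.image (Sum.inl : Fin r → Fin r ⊕ Fin r × Fin s)
              Finset.univ).card ≤ r := le_trans Finset.card_image_le (by simp)
          have h2 : (Finset.image (fun j => (Sum.inr (i0, j) : Fin r ⊕ Fin r × Fin s))
              Finset.univ).card ≤ s := le_trans Finset.card_image_le (by simp)
          omega
end
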